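/- arXiv:1203.3609 — 8 statements merged into one kernel-verified Lean document; each statement's English description precedes it below -/
import Mathlib

section
/- Let K be a field and let F: K^n → K^n be a Keller map all of whose terms have degree 0, 1, or d only, where d > 1 and d is a unit in K (i.e. the characteristic of K does not divide d). Then for every a ∈ K^n, the restriction of F to the line Ka = {λa : λ ∈ K} through a and the origin is injective. -/
open MvPolynomial Finset

section KellerAux

variable {R : Type*} [CommRing R] {n : ℕ}

/-- The degree-`k` part of `p` evaluated at `x`. -/
private noncomputable def kellerS (k : ℕ) (p : MvPolynomial (Fin n) R) (x : Fin n → R) : R :=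
  ∑ m ∈ p.support.filter (fun m => (m.sum fun _ e => e) = k), coeff m p * ∏ i, x i ^ m i

private lemma mdeg_eq (m : Fin n →₀ ℕ) : (m.sum fun _ e => e) = ∑ i, m i :=
  Finsupp.sum_fintype _ _ (fun _ => rfl)

private lemma prod_smul_pow (x : Fin n → R) (lam : R) (e : Fin n → ℕ) :
    ∏ i, ((lam • x) i) ^ e i = lam ^ (∑ i, e i) * ∏ i, x i ^ e i := by
  rw [← Finset.prod_pow_eq_pow_sum, ← Finset.prod_mul_distrib]
  refine Finset.prod_congr rfl fun i _ => ?_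
  simp [mul_pow]

private lemma keller_split (d : ℕ) (hd : 1 < d) (p : MvPolynomial (Fin n) R)
    (hdeg : ∀ m ∈ p.support, (m.sum fun _ e => e) ∈ ({0, 1, d} : Set ℕ))
    (x : Fin n → R) (g : ℕ → R) :
    ∑ m ∈ p.support, g (m.sum fun _ e => e) * (coeff m p * ∏ i, x i ^ m i)
      = g 0 * kellerS 0 p x + g 1 * kellerS 1 p x + g d * kellerS d p x := by
  have hmaps : ∀ m ∈ p.support, (m.sum fun _ e => e) ∈ ({0, 1, d} : Finset ℕ) := by
    intro m hm
    have := hdeg m hm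
    simp only [Set.mem_insert_iff, Set.mem_singleton_iff] at this
    simp only [Finset.mem_insert, Finset.mem_singleton]
    tauto
  rw [← Finset.sum_fiberwise_of_maps_to hmaps
    (fun m => g (m.sum fun _ e => e) * (coeff m p * ∏ i, x i ^ m i))]
  have h0 : (0 : ℕ) ∉ ({1, d} : Finset ℕ) := by
    simp only [Finset.mem_insert, Finset.mem_singleton]; omega
  have h1 : (1 : ℕ) ∉ ({d} : Finset ℕ) := by
    simp only [Finset.mem_singleton]; omega
  rw [show ({0, 1, d} : Finset ℕ) = insert 0 (insert 1 {d}) from rfl,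
    Finset.sum_insert h0, Finset.sum_insert h1, Finset.sum_singleton]
  have key : ∀ k : ℕ,
      ∑ m ∈ p.support.filter (fun m => (m.sum fun _ e => e) = k),
        g (m.sum fun _ e => e) * (coeff m p * ∏ i, x i ^ m i) = g k * kellerS k p x := by
    intro k
    rw [kellerS, Finset.mul_sum]
    refine Finset.sum_congr rfl fun m hm => ?_
    rw [(Finset.mem_filter.mp hm).2]
  rw [key 0, key 1, key d]
  ring

private lemma keller_eval_smul (d : ℕ) (hd : 1 < d) (p : MvPolynomial (Fin n) R)
    (hdeg : ∀ m ∈ p.support, (m.sum fun _ e => e) ∈ ({0, 1, d} : Set ℕ))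
    (x : Fin n → R) (lam : R) :
    eval (lam • x) p = kellerS 0 p x + lam * kellerS 1 p x + lam ^ d * kellerS d p x := by
  have h1 : eval (lam • x) p
      = ∑ m ∈ p.support, lam ^ (m.sum fun _ e => e) * (coeff m p * ∏ i, x i ^ m i) := by
    rw [eval_eq']
    refine Finset.sum_congr rfl fun m _ => ?_
    rw [prod_smul_pow, mdeg_eq]
    ring
  rw [h1, keller_split d hd p hdeg x (fun k => lam ^ k)]
  simp

private lemma keller_pderiv_monomial_sum (m : Fin n →₀ ℕ) (c : R) (x : Fin n → R) (lam : R) :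
    ∑ j, x j * eval (lam • x) (pderiv j (monomial m c)) =
      ((m.sum fun _ e => e : ℕ) : R) * lam ^ ((m.sum fun _ e => e) - 1)
        * (c * ∏ i, x i ^ m i) := by
  have key : ∀ j, x j * eval (lam • x) (pderiv j (monomial m c)) =
      (m j : R) * (lam ^ ((∑ i, m i) - 1) * (c * ∏ i, x i ^ m i)) := by
    intro j
    rcases Nat.eq_zero_or_pos (m j) with hj | hj
    · simp [pderiv_monomial, hj]
    · rw [pderiv_monomial, eval_monomial]
      set m' : Fin n →₀ ℕ := m - Finsupp.single j 1 with hm'def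
      have hm' : ∀ i, m' i = if i = j then m j - 1 else m i := by
        intro i
        rcases eq_or_ne i j with rfl | hne
        · simp [hm'def, Finsupp.tsub_apply, Finsupp.single_apply]
        · simp [hm'def, Finsupp.tsub_apply, Finsupp.single_apply, Ne.symm hne, hne]
      have hprod : (m'.prod fun i e => ((lam • x) i) ^ e)
          = lam ^ (∑ i, m' i) * ∏ i, x i ^ m' i := by
        rw [Finsupp.prod_pow, prod_smul_pow]
      have hsum : ∑ i, m' i = (∑ i, m i) - 1 := by
        have e1 : ∑ i, m i = m j + ∑ i ∈ Finset.univ.erase j, m i :=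
          (Finset.add_sum_erase _ _ (Finset.mem_univ j)).symm
        have e2 : ∑ i, m' i = m' j + ∑ i ∈ Finset.univ.erase j, m' i :=
          (Finset.add_sum_erase _ _ (Finset.mem_univ j)).symm
        have e3 : ∑ i ∈ Finset.univ.erase j, m' i = ∑ i ∈ Finset.univ.erase j, m i := by
          refine Finset.sum_congr rfl fun i hi => ?_
          rw [hm' i, if_neg (Finset.mem_erase.mp hi).1]
        have e4 : m' j = m j - 1 := by rw [hm' j, if_pos rfl]
        omega
      have hxprod : x j * ∏ i, x i ^ m' i = ∏ i, x i ^ m i := by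
        rw [← Finset.mul_prod_erase Finset.univ (fun i => x i ^ m' i) (Finset.mem_univ j),
          ← Finset.mul_prod_erase Finset.univ (fun i => x i ^ m i) (Finset.mem_univ j)]
        have e3 : ∏ i ∈ Finset.univ.erase j, x i ^ m' i
            = ∏ i ∈ Finset.univ.erase j, x i ^ m i := by
          refine Finset.prod_congr rfl fun i hi => ?_
          rw [hm' i, if_neg (Finset.mem_erase.mp hi).1]
        rw [e3, ← mul_assoc]
        congr 1
        rw [hm' j, if_pos rfl, ← pow_succ']
        congr 1
        omega
      rw [hprod, hsum, ← hxprod]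
      ring
  rw [Finset.sum_congr rfl (fun j _ => key j), ← Finset.sum_mul, mdeg_eq]
  push_cast
  ring

private lemma keller_pderiv_sum (d : ℕ) (hd : 1 < d) (p : MvPolynomial (Fin n) R)
    (hdeg : ∀ m ∈ p.support, (m.sum fun _ e => e) ∈ ({0, 1, d} : Set ℕ))
    (x : Fin n → R) (lam : R) :
    ∑ j, x j * eval (lam • x) (pderiv j p)
      = kellerS 1 p x + (d : R) * lam ^ (d - 1) * kellerS d p x := by
  have h : ∀ j : Fin n, eval (lam • x) (pderiv j p)
      = ∑ m ∈ p.support, eval (lam • x) (pderiv j (monomial m (coeff m p))) := by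
    intro j
    conv_lhs => rw [p.as_sum]
    rw [map_sum, map_sum]
  calc ∑ j, x j * eval (lam • x) (pderiv j p)
      = ∑ j, ∑ m ∈ p.support, x j * eval (lam • x) (pderiv j (monomial m (coeff m p))) := by
        simp_rw [h, Finset.mul_sum]
    _ = ∑ m ∈ p.support, ∑ j, x j * eval (lam • x) (pderiv j (monomial m (coeff m p))) :=
        Finset.sum_comm
    _ = ∑ m ∈ p.support, ((m.sum fun _ e => e : ℕ) : R) * lam ^ ((m.sum fun _ e => e) - 1)
          * (coeff m p * ∏ i, x i ^ m i) :=
        Finset.sum_congr rfl fun m _ => keller_pderiv_monomial_sum m (coeff m p) x lam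
    _ = _ := by
        rw [keller_split d hd p hdeg x (fun k => (k : R) * lam ^ (k - 1))]
        norm_num

private lemma kellerS_map {S : Type*} [CommRing S] (f : R →+* S) (hf : Function.Injective f)
    (k : ℕ) (p : MvPolynomial (Fin n) R) (x : Fin n → R) :
    kellerS k (map f p) (fun i => f (x i)) = f (kellerS k p x) := by
  unfold kellerS
  rw [support_map_of_injective _ hf, map_sum]
  refine Finset.sum_congr rfl fun m _ => ?_
  rw [coeff_map, map_mul, map_prod]
  simp [map_pow]

end KellerAux

/-- A Keller map whose terms have degree 0, 1, or d only
(with d > 1 a unit in K) is injective on every line through the origin. -/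
theorem keller_deg_0_1_d_injective_on_lines
    {K : Type*} [Field K] {n : ℕ} (F : Fin n → MvPolynomial (Fin n) K)
    (d : ℕ) (hd : 1 < d) (hdK : (d : K) ≠ 0)
    (hdeg : ∀ i, ∀ m ∈ (F i).support, (m.sum fun _ e => e) ∈ ({0, 1, d} : Set ℕ))
    (hKeller : ∃ c : K, c ≠ 0 ∧ (Matrix.of fun i j => pderiv j (F i)).det = C c)
    (a : Fin n → K) :
    ∀ s t : K, (fun i => eval (s • a) (F i)) = (fun i => eval (t • a) (F i)) →
      s • a = t • a := by
  intro s t heq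
  by_cases ha : a = 0
  · simp [ha]
  by_cases hst : s = t
  · rw [hst]
  exfalso
  obtain ⟨c, hc0, hdet⟩ := hKeller
  set L := AlgebraicClosure K
  set φ : K →+* L := algebraMap K L with hφdef
  have hφ : Function.Injective φ := φ.injective
  set l : Fin n → K := fun i => kellerS 1 (F i) a with hl
  set h : Fin n → K := fun i => kellerS d (F i) a with hh
  have hev : ∀ i, s * l i + s ^ d * h i = t * l i + t ^ d * h i := by
    intro i
    have h0 := congrFun heq i
    rw [keller_eval_smul d hd (F i) (hdeg i) a s,
      keller_eval_smul d hd (F i) (hdeg i) a t] at h0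
    linear_combination h0
  have hsub : s - t ≠ 0 := sub_ne_zero.mpr hst
  set μK : K := (s ^ d - t ^ d) / (s - t) with hμK
  have hμ : ∀ i, l i = -μK * h i := by
    intro i
    have h2 : s ^ d - t ^ d = (s - t) * μK := by
      rw [hμK]; field_simp
    have h3 : (s - t) * (l i + μK * h i) = 0 := by
      have h1 : (s - t) * l i + (s ^ d - t ^ d) * h i = 0 := by linear_combination hev i
      linear_combination h1 - h i * h2
    rcases mul_eq_zero.mp h3 with h4 | h4
    · exact absurd h4 hsub
    · linear_combination h4
  have hdL : (d : L) ≠ 0 := by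
    intro hx
    apply hdK
    apply hφ
    rw [map_natCast, hx, map_zero]
  obtain ⟨lam, hlam⟩ : ∃ lam : L, (d : L) * lam ^ (d - 1) = φ μK := by
    have hpos : (0 : WithBot ℕ) < (Polynomial.C ((d : L)) * Polynomial.X ^ (d - 1)).degree := by
      rw [Polynomial.degree_C_mul hdL, Polynomial.degree_X_pow]
      exact_mod_cast Nat.pos_of_ne_zero (by omega)
    have hq : (Polynomial.C ((d : L)) * Polynomial.X ^ (d - 1)
        - Polynomial.C (φ μK)).degree ≠ 0 := by
      rw [Polynomial.degree_sub_C hpos, Polynomial.degree_C_mul hdL, Polynomial.degree_X_pow]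
      have hne : d - 1 ≠ 0 := by omega
      exact_mod_cast hne
    obtain ⟨z, hz⟩ := IsAlgClosed.exists_root _ hq
    refine ⟨z, ?_⟩
    have := hz
    simp only [Polynomial.IsRoot, Polynomial.eval_sub, Polynomial.eval_mul, Polynomial.eval_C,
      Polynomial.eval_pow, Polynomial.eval_X] at this
    linear_combination this
  set b : Fin n → L := fun j => φ (a j) with hb
  set M : Matrix (Fin n) (Fin n) L :=
    Matrix.of fun i j => eval (lam • b) (pderiv j (map φ (F i))) with hM
  have hdetM : M.det = φ c := by
    have hMeq : M = ((Matrix.of fun i j => pderiv j (F i)).map (map φ)).map (eval (lam • b)) := by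
      ext i j
      simp [hM, Matrix.map_apply, pderiv_map]
    rw [hMeq, ← RingHom.mapMatrix_apply, ← RingHom.mapMatrix_apply,
      ← RingHom.map_det, ← RingHom.map_det, hdet]
    simp
  have hdeg' : ∀ i, ∀ m ∈ (map φ (F i)).support,
      (m.sum fun _ e => e) ∈ ({0, 1, d} : Set ℕ) := by
    intro i m hm
    rw [support_map_of_injective _ hφ] at hm
    exact hdeg i m hm
  have hMb : M.mulVec b = 0 := by
    funext i
    have : (M.mulVec b) i = ∑ j, b j * eval (lam • b) (pderiv j (map φ (F i))) := by
      rw [Matrix.mulVec, dotProduct]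
      exact Finset.sum_congr rfl fun j _ => mul_comm _ _
    rw [this, keller_pderiv_sum d hd (map φ (F i)) (hdeg' i) b lam]
    have h1 : kellerS 1 (map φ (F i)) b = φ (l i) := kellerS_map φ hφ 1 (F i) a
    have h2 : kellerS d (map φ (F i)) b = φ (h i) := kellerS_map φ hφ d (F i) a
    rw [h1, h2, hμ i, hlam]
    simp only [map_mul, map_neg, Pi.zero_apply]
    ring
  have hbz : b = 0 := by
    refine Matrix.eq_zero_of_mulVec_eq_zero ?_ hMb
    rw [hdetM]
    intro hx
    exact hc0 (hφ (by rw [hx, map_zero]))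
  apply ha
  funext j
  have hbj := congrFun hbz j
  simp only [hb, Pi.zero_apply] at hbj
  apply hφ
  rw [Pi.zero_apply, map_zero]
  exact hbj
end

section
/- Let K be a field, let d_1, d_2, ..., d_r, d_{r+1} be nonnegative integers, and let G: K → K^m be given by G(t) = C·(t^{d_1}, t^{d_2}, ..., t^{d_r}, t^{d_{r+1}})^T for a matrix C ∈ Mat_{m,r+1}(K). Suppose a_1, ..., a_r ∈ K satisfy G(a_1) = G(a_2) = ... = G(a_r) = 0 and that the r×r generalized Vandermonde matrix A^{(r,r)} with (i,j)-entry a_j^{d_i} has rank r. Then rank C ≤ 1, and if C ≠ 0 then the last column of C (the column of coefficients of t^{d_{r+1}}) is nonzero. -/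
/-!
Evaluating the monomials at the points gives an `(r+1) × r` matrix `B` with `C * B = 0`, whose
first `r` rows form the rank-`r` matrix `A^{(r,r)}`. Hence `rank C + r ≤ rank C + rank B ≤ r + 1`.
If the last column of `C` vanishes, the remaining `m × r` block `C'` of `C` satisfies
`C' * A^{(r,r)} = 0`, so `rank C' + r ≤ r` and `C = 0`.
-/

namespace Matrix

theorem eq_zero_of_rank_eq_zero {K l o : Type*} [Field K] [Finite l] [Fintype o]
    {A : Matrix l o K} (h : A.rank = 0) : A = 0 := by
  rw [rank_eq_finrank_span_cols, Submodule.finrank_eq_zero, Submodule.span_eq_bot] at h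
  ext i j
  exact congrFun (h _ ⟨j, rfl⟩) i

theorem submatrix_castSucc_mul_submatrix_castSucc {R l o : Type*} [CommSemiring R] {n : ℕ}
    {A : Matrix l (Fin (n + 1)) R} (hA : A.col (Fin.last n) = 0) (B : Matrix (Fin (n + 1)) o R) :
    A.submatrix id Fin.castSucc * B.submatrix Fin.castSucc id = A * B := by
  ext i k
  simp [mul_apply, Fin.sum_univ_castSucc, show A i (Fin.last n) = 0 from congrFun hA i]

variable {K l o : Type*} [Field K] [Finite l] [Fintype o] {n : ℕ}
  {A : Matrix l (Fin (n + 1)) K} {B : Matrix (Fin (n + 1)) o K}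

theorem rank_le_one_of_mul_eq_zero (hAB : A * B = 0)
    (hB : (B.submatrix Fin.castSucc id).rank = n) : A.rank ≤ 1 := by
  have h := rank_add_rank_le_card_of_mul_eq_zero hAB
  have := B.rank_submatrix_le Fin.castSucc id
  rw [Fintype.card_fin] at h
  omega

theorem eq_zero_of_mul_eq_zero_of_col_last_eq_zero (hAB : A * B = 0)
    (hB : (B.submatrix Fin.castSucc id).rank = n) (hA : A.col (Fin.last n) = 0) : A = 0 := by
  rw [← submatrix_castSucc_mul_submatrix_castSucc hA] at hAB
  have h := rank_add_rank_le_card_of_mul_eq_zero hAB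
  rw [hB, Fintype.card_fin] at h
  have hA' := eq_zero_of_rank_eq_zero (by omega : (A.submatrix id Fin.castSucc).rank = 0)
  ext i j
  induction j using Fin.lastCases with
  | last => exact congrFun hA i
  | cast j => exact congrFun (congrFun hA' i) j

end Matrix

/-- If `G(t) = C • (t^{d₁}, …, t^{d_{r+1}})` vanishes at `a₁, …, a_r`
and the generalized Vandermonde matrix `A^{(r,r)}` has rank `r`, then `rank C ≤ 1`,
and if `C ≠ 0` then the last column of `C` is nonzero. -/
theorem rank_le_one_of_generalized_vandermonde
    {K : Type*} [Field K] {m r : ℕ}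
    (C : Matrix (Fin m) (Fin (r + 1)) K) (d : Fin (r + 1) → ℕ) (a : Fin r → K)
    (hG : ∀ i : Fin r, C.mulVec (fun j => a i ^ d j) = 0)
    (hV : (Matrix.of fun i j : Fin r => a j ^ d i.castSucc).rank = r) :
    C.rank ≤ 1 ∧ (C ≠ 0 → (fun i => C i (Fin.last r)) ≠ 0) := by
  let B : Matrix (Fin (r + 1)) (Fin r) K := .of fun j i => a i ^ d j
  have hCB : C * B = 0 := by
    ext k i
    exact congrFun (hG i) k
  exact ⟨Matrix.rank_le_one_of_mul_eq_zero hCB hV,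
    fun hC hlast => hC (Matrix.eq_zero_of_mul_eq_zero_of_col_last_eq_zero hCB hV hlast)⟩
end

section
/- Let K be a field and let F: K^n → K^m be a polynomial map such that the degree of each term of F is contained in {d_1, d_2, ..., d_r, d_{r+1}}, where 0 ∈ {d_1,...,d_{r+1}}. Assume that for every c ∈ K^r the univariate polynomial (d/dt)(t^{d_{r+1}} + c_r t^{d_r} + ... + c_2 t^{d_2} + c_1 t^{d_1}) has a root in K. Let b ∈ K^n be nonzero and suppose F(a_1 b) = F(a_2 b) = ... = F(a_r b) for elements a_1,...,a_r ∈ K such that the r×r generalized Vandermonde matrix A^{(r,r)} with (i,j)-entry a_j^{d_i} has rank r. Then there exists a_{r+1} ∈ K such that (jac F) evaluated at the point a_{r+1}b, multiplied by the column vector b, is the zero vector; in particular, (jac F) evaluated at a_{r+1}b has rank < n. -/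
open Polynomial

namespace JacAux

variable {K : Type*} [CommRing K] {n : ℕ}

noncomputable def lmap (b : Fin n → K) : MvPolynomial (Fin n) K →ₐ[K] Polynomial K :=
  MvPolynomial.aeval (fun i => Polynomial.C (b i) * Polynomial.X)

lemma eval_lmap (b : Fin n → K) (t : K) (p : MvPolynomial (Fin n) K) :
    (lmap b p).eval t = MvPolynomial.eval (t • b) p := by
  induction p using MvPolynomial.induction_on with
  | C a => simp [lmap]
  | add p q hp hq => simp [map_add, hp, hq]
  | mul_X p i hp =>
    rw [map_mul, eval_mul, hp]
    have : (lmap b (MvPolynomial.X i)).eval t = t * b i := by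
      rw [lmap, MvPolynomial.aeval_X, eval_mul, eval_C, eval_X, mul_comm]
    rw [this, map_mul]
    simp

lemma derivative_lmap (b : Fin n → K) (p : MvPolynomial (Fin n) K) :
    derivative (lmap b p) = ∑ j, lmap b (MvPolynomial.pderiv j p) * C (b j) := by
  induction p using MvPolynomial.induction_on with
  | C a => simp [lmap]
  | add p q hp hq => simp [map_add, hp, hq, add_mul, Finset.sum_add_distrib]
  | mul_X p i hp =>
    rw [map_mul]
    have h1 : lmap b (MvPolynomial.X i) = C (b i) * X := by simp [lmap]
    rw [h1, derivative_mul, hp, derivative_mul, derivative_C, derivative_X]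
    have h2 : ∀ j : Fin n, lmap b (MvPolynomial.pderiv j (p * MvPolynomial.X i)) * C (b j)
        = lmap b (MvPolynomial.pderiv j p) * C (b j) * (C (b i) * X)
          + (if j = i then lmap b p * C (b i) else 0) := by
      intro j
      rw [MvPolynomial.pderiv_mul, MvPolynomial.pderiv_X]
      by_cases hji : j = i
      · subst hji
        simp [Pi.single_eq_same, map_add, map_mul, h1]
        ring
      · simp [Pi.single_eq_of_ne' hji, hji, map_add, map_mul, h1]
        ring
    rw [Finset.sum_congr rfl fun j _ => h2 j, Finset.sum_add_distrib,
      Finset.sum_ite_eq' Finset.univ i]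
    simp [Finset.sum_mul]

lemma lmap_monomial (b : Fin n → K) (mo : Fin n →₀ ℕ) (c : K) :
    lmap b (MvPolynomial.monomial mo c) =
      C (c * ∏ i ∈ mo.support, b i ^ mo i) * X ^ (mo.sum fun _ e => e) := by
  rw [lmap, MvPolynomial.aeval_monomial]
  have : (mo.prod fun i e => (C (b i) * X) ^ e)
      = (∏ i ∈ mo.support, C (b i ^ mo i)) * ∏ i ∈ mo.support, X ^ mo i := by
    rw [Finsupp.prod, ← Finset.prod_mul_distrib]
    exact Finset.prod_congr rfl fun i _ => by rw [mul_pow, ← C_pow]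
  rw [this, Finset.prod_pow_eq_pow_sum, ← map_prod, Finsupp.sum, map_mul,
    Polynomial.algebraMap_eq]
  ring

/-- values-at-points linear form -/
def Bv {r : ℕ} (a : Fin r → K) (d : Fin (r + 1) → ℕ) (c : Fin (r + 1) → K) (i : Fin r) : K :=
  ∑ j, c j * a i ^ d j

/-- coefficient vector to polynomial -/
noncomputable def Phi {r : ℕ} (d : Fin (r + 1) → ℕ) (c : Fin (r + 1) → K) : Polynomial K :=
  ∑ j, C (c j) * X ^ d j

lemma eval_Phi {r : ℕ} (d : Fin (r + 1) → ℕ) (c : Fin (r + 1) → K) (a : Fin r → K) (i : Fin r) :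
    (Phi d c).eval (a i) = Bv a d c i := by
  rw [Phi, Bv, Polynomial.eval_finset_sum]
  exact Finset.sum_congr rfl fun j _ => by rw [eval_mul, eval_C, eval_pow, eval_X]

end JacAux

/-- If all terms of `F : Kⁿ → Kᵐ` have degree in `{d₁, …, d_{r+1}} ∋ 0`,
every derivative `(t^{d_{r+1}} + c_r t^{d_r} + ⋯ + c₁ t^{d₁})'` has a root in `K`,
`b ≠ 0`, `F(a₁b) = ⋯ = F(a_r b)` and the generalized Vandermonde matrix has rank `r`,
then there is `a_{r+1} ∈ K` with `(jac F)|_{a_{r+1}b} · b = 0`; in particular the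
Jacobian matrix evaluated at `a_{r+1}b` has rank `< n`. -/
theorem jacobian_kernel_on_line_of_equal_values
    {K : Type*} [Field K] {n m r : ℕ}
    (F : Fin m → MvPolynomial (Fin n) K) (d : Fin (r + 1) → ℕ)
    (h0 : ∃ j, d j = 0)
    (hdeg : ∀ i, ∀ mo ∈ (F i).support, ∃ j, (mo.sum fun _ e => e) = d j)
    (hroot : ∀ c : Fin r → K, ∃ t : K,
      Polynomial.eval t (Polynomial.derivative
        (Polynomial.X ^ d (Fin.last r) +
          ∑ j : Fin r, Polynomial.C (c j) * Polynomial.X ^ d j.castSucc)) = 0)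
    (b : Fin n → K) (hb : b ≠ 0) (a : Fin r → K)
    (hFa : ∀ i j : Fin r,
      (fun k => MvPolynomial.eval (a i • b) (F k)) =
        fun k => MvPolynomial.eval (a j • b) (F k))
    (hV : (Matrix.of fun i j : Fin r => a j ^ d i.castSucc).rank = r) :
    ∃ t : K,
      (Matrix.of fun i j => MvPolynomial.eval (t • b) (MvPolynomial.pderiv j (F i))).mulVec b
        = 0 ∧
      (Matrix.of fun i j => MvPolynomial.eval (t • b) (MvPolynomial.pderiv j (F i))).rank
        < n := by
  classical
  obtain ⟨j₀, hj₀⟩ := h0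
  -- invertibility of the Vandermonde matrix
  have hAunit : IsUnit (Matrix.of fun i j : Fin r => a j ^ d i.castSucc) := by
    have hrange : LinearMap.range (Matrix.of fun i j : Fin r => a j ^ d i.castSucc).mulVecLin
        = ⊤ := by
      apply Submodule.eq_top_of_finrank_eq
      rw [Module.finrank_fin_fun]
      exact hV
    rw [← Matrix.mulVec_surjective_iff_isUnit]
    intro y
    obtain ⟨x, hx⟩ := LinearMap.range_eq_top.mp hrange y
    exact ⟨x, hx⟩
  set T : Matrix (Fin r) (Fin r) K := Matrix.of fun i j : Fin r => a i ^ d j.castSucc with hT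
  have hTdet : IsUnit T.det := by
    have hTt : T = (Matrix.of fun i j : Fin r => a j ^ d i.castSucc).transpose := rfl
    rw [hTt, Matrix.det_transpose]
    exact (Matrix.isUnit_iff_isUnit_det _).mp hAunit
  set v : Fin r → K := fun i => a i ^ d (Fin.last r) with hv
  set u : Fin (r + 1) → K := Fin.snoc (-(T⁻¹.mulVec v)) 1 with hu
  have hulast : u (Fin.last r) = 1 := by rw [hu]; exact Fin.snoc_last _ _
  have hucast : ∀ j : Fin r, u j.castSucc = (-(T⁻¹.mulVec v)) j := by
    intro j; rw [hu]; exact Fin.snoc_castSucc _ _ _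
  have hBsplit : ∀ (c : Fin (r + 1) → K) (i : Fin r),
      JacAux.Bv a d c i = T.mulVec (fun j => c j.castSucc) i + c (Fin.last r) * v i := by
    intro c i
    rw [JacAux.Bv, Fin.sum_univ_castSucc, hv]
    congr 1
    rw [Matrix.mulVec, dotProduct]
    exact Finset.sum_congr rfl fun j _ => by rw [hT, Matrix.of_apply, mul_comm]
  have hBu : ∀ i, JacAux.Bv a d u i = 0 := by
    intro i
    rw [hBsplit, hulast, one_mul]
    have h5 : (fun j => u j.castSucc) = -(T⁻¹.mulVec v) := funext fun j => hucast j
    rw [h5, Matrix.mulVec_neg, Matrix.mulVec_mulVec, Matrix.mul_nonsing_inv _ hTdet,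
      Matrix.one_mulVec]
    exact neg_add_cancel _
  have huniq : ∀ c : Fin (r + 1) → K, (∀ i, JacAux.Bv a d c i = 0) → c (Fin.last r) = 0 →
      c = 0 := by
    intro c h1 h2
    have h3 : T.mulVec (fun j => c j.castSucc) = 0 := by
      funext i
      have h4 := hBsplit c i
      rw [h1 i, h2, zero_mul, add_zero] at h4
      simpa using h4.symm
    have h5 : T⁻¹.mulVec (T.mulVec fun j => c j.castSucc) = T⁻¹.mulVec 0 := by rw [h3]
    rw [Matrix.mulVec_mulVec, Matrix.nonsing_inv_mul _ hTdet, Matrix.one_mulVec,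
      Matrix.mulVec_zero] at h5
    funext j
    refine Fin.lastCases h2 (fun i => ?_) j
    exact congrFun h5 i
  -- the auxiliary polynomial and its critical point
  obtain ⟨t₀, ht₀⟩ := hroot fun j => u j.castSucc
  have hΦu : (Polynomial.X ^ d (Fin.last r) +
      ∑ j : Fin r, Polynomial.C (u j.castSucc) * Polynomial.X ^ d j.castSucc)
      = JacAux.Phi d u := by
    rw [JacAux.Phi, Fin.sum_univ_castSucc, hulast, map_one, one_mul, add_comm]
  rw [hΦu] at ht₀
  -- the constant direction
  set w : Fin (r + 1) → K := Pi.single j₀ 1 with hw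
  have hΦw : JacAux.Phi d w = 1 := by
    rw [JacAux.Phi, Finset.sum_eq_single j₀]
    · rw [hw, Pi.single_eq_same, map_one, one_mul, hj₀, pow_zero]
    · intro j _ hj
      rw [hw, Pi.single_eq_of_ne hj, map_zero, zero_mul]
    · intro h; exact absurd (Finset.mem_univ _) h
  have hBw : ∀ i, JacAux.Bv a d w i = 1 := by
    intro i
    rw [JacAux.Bv, Finset.sum_eq_single j₀]
    · rw [hw, Pi.single_eq_same, one_mul, hj₀, pow_zero]
    · intro j _ hj
      rw [hw, Pi.single_eq_of_ne hj, zero_mul]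
    · intro h; exact absurd (Finset.mem_univ _) h
  -- main claim : derivative of each restricted component vanishes at t₀
  have key : ∀ k : Fin m,
      Polynomial.eval t₀ (Polynomial.derivative (JacAux.lmap b (F k))) = 0 := by
    intro k
    have hμ : ∃ μ : K, ∀ i : Fin r, MvPolynomial.eval (a i • b) (F k) = μ := by
      by_cases hr : 0 < r
      · exact ⟨MvPolynomial.eval (a ⟨0, hr⟩ • b) (F k), fun i => congrFun (hFa i ⟨0, hr⟩) k⟩
      · exact ⟨0, fun i => absurd i.isLt (by omega)⟩
    obtain ⟨μ, hμk⟩ := hμ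
    -- choice of degree index for each monomial
    set ch : (Fin n →₀ ℕ) → Fin (r + 1) := fun mo =>
      if h : ∃ j, (mo.sum fun _ e => e) = d j then h.choose else Fin.last r with hch
    have hchd : ∀ mo ∈ (F k).support, d (ch mo) = (mo.sum fun _ e => e) := by
      intro mo hmo
      have h : ∃ j, (mo.sum fun _ e => e) = d j := hdeg k mo hmo
      rw [hch]
      simp only [dif_pos h]
      exact h.choose_spec.symm
    set e : Fin (r + 1) → K := fun j =>
      ∑ mo ∈ (F k).support.filter (fun mo => ch mo = j),
        MvPolynomial.coeff mo (F k) * ∏ i ∈ mo.support, b i ^ mo i with he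
    have hge : JacAux.lmap b (F k) = JacAux.Phi d e := by
      conv_lhs => rw [(F k).as_sum]
      rw [map_sum,
        ← Finset.sum_fiberwise ((F k).support) ch
          (fun mo => JacAux.lmap b (MvPolynomial.monomial mo (MvPolynomial.coeff mo (F k)))),
        JacAux.Phi]
      refine Finset.sum_congr rfl fun j _ => ?_
      rw [he]
      rw [map_sum, Finset.sum_mul]
      refine Finset.sum_congr rfl fun mo hmo => ?_
      obtain ⟨hmo1, hmo2⟩ := Finset.mem_filter.mp hmo
      rw [JacAux.lmap_monomial, ← hmo2, hchd mo hmo1]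
    have hBe : ∀ i : Fin r, JacAux.Bv a d e i = μ := by
      intro i
      have h1 : (JacAux.Phi d e).eval (a i) = JacAux.Bv a d e i := JacAux.eval_Phi d e a i
      rw [← hge, JacAux.eval_lmap, hμk i] at h1
      exact h1.symm
    -- decomposition e = α u + μ w
    set α : K := e (Fin.last r) - μ * w (Fin.last r) with hα
    have hz0 : (fun j => e j - α * u j - μ * w j) = 0 := by
      apply huniq
      · intro i
        have expand : JacAux.Bv a d (fun j => e j - α * u j - μ * w j) i
            = JacAux.Bv a d e i - α * JacAux.Bv a d u i - μ * JacAux.Bv a d w i := by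
          rw [JacAux.Bv, JacAux.Bv, JacAux.Bv, JacAux.Bv, Finset.mul_sum, Finset.mul_sum,
            ← Finset.sum_sub_distrib, ← Finset.sum_sub_distrib]
          exact Finset.sum_congr rfl fun j _ => by ring
        rw [expand, hBe i, hBu i, hBw i]
        ring
      · rw [hulast, hα]
        ring
    have hz : e = fun j => α * u j + μ * w j := by
      funext j
      have h6 := congrFun hz0 j
      simp only [Pi.zero_apply] at h6
      linear_combination h6
    have hgdecomp : JacAux.lmap b (F k) = Polynomial.C α * JacAux.Phi d u + Polynomial.C μ := by
      rw [hge, hz]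
      have hlin : JacAux.Phi d (fun j => α * u j + μ * w j)
          = Polynomial.C α * JacAux.Phi d u + Polynomial.C μ * JacAux.Phi d w := by
        rw [JacAux.Phi, JacAux.Phi, JacAux.Phi, Finset.mul_sum, Finset.mul_sum,
          ← Finset.sum_add_distrib]
        refine Finset.sum_congr rfl fun j _ => ?_
        rw [map_add, map_mul, map_mul]
        ring
      rw [hlin, hΦw, mul_one]
    rw [hgdecomp]
    simp [ht₀]
  -- assemble the conclusion
  have hmv : (Matrix.of fun i j =>
      MvPolynomial.eval (t₀ • b) (MvPolynomial.pderiv j (F i))).mulVec b = 0 := by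
    funext k
    have h1 := key k
    rw [JacAux.derivative_lmap, Polynomial.eval_finset_sum] at h1
    simp only [Polynomial.eval_mul, Polynomial.eval_C, JacAux.eval_lmap] at h1
    simpa [Matrix.mulVec, dotProduct] using h1
  refine ⟨t₀, hmv, ?_⟩
  set M : Matrix (Fin m) (Fin n) K :=
    Matrix.of fun i j => MvPolynomial.eval (t₀ • b) (MvPolynomial.pderiv j (F i)) with hM
  have hker : b ∈ LinearMap.ker M.mulVecLin := by
    rw [LinearMap.mem_ker, Matrix.mulVecLin_apply]
    exact hmv
  have hbne : (⟨b, hker⟩ : LinearMap.ker M.mulVecLin) ≠ 0 := by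
    intro h
    exact hb (congrArg Subtype.val h)
  have hnt : Nontrivial (LinearMap.ker M.mulVecLin) := nontrivial_of_ne _ _ hbne
  have hpos : 0 < Module.finrank K (LinearMap.ker M.mulVecLin) := Module.finrank_pos
  have hsum := LinearMap.finrank_range_add_finrank_ker M.mulVecLin
  rw [Module.finrank_fin_fun] at hsum
  have hrank : M.rank = Module.finrank K (LinearMap.range M.mulVecLin) := rfl
  omega
end

section
/- Let K be a field and let F: K^n → K^n be a polynomial map such that the degree of each term of F is contained in {d_1, d_2, ..., d_r, d_{r+1}}, where 0 ∈ {d_1,...,d_{r+1}}, d_{r+1} is the largest of these exponents, d_{r+1} ≠ 1, and the characteristic of K does not divide d_{r+1}. Suppose b ∈ K^n is nonzero and F(a_1 b) = F(a_2 b) = ... = F(a_r b) for elements a_1,...,a_r ∈ K such that the r×r generalized Vandermonde matrix A^{(r,r)} with (i,j)-entry a_j^{d_i} has rank r. Then the Jacobian determinant det jac F is not a nonzero constant of K. -/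
open MvPolynomial


noncomputable def lineφ {K : Type*} [CommSemiring K] {n : ℕ} (b : Fin n → K) :
    MvPolynomial (Fin n) K →ₐ[K] Polynomial K :=
  MvPolynomial.aeval (fun k => Polynomial.C (b k) * Polynomial.X)

lemma lineφ_X {K : Type*} [CommSemiring K] {n : ℕ} (b : Fin n → K) (i : Fin n) :
    lineφ b (MvPolynomial.X i) = Polynomial.C (b i) * Polynomial.X := by
  simp [lineφ]

lemma lineφ_eval {K : Type*} [CommSemiring K] {n : ℕ} (b : Fin n → K) (t : K)
    (P : MvPolynomial (Fin n) K) :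
    Polynomial.eval t (lineφ b P) = MvPolynomial.eval (t • b) P := by
  induction P using MvPolynomial.induction_on with
  | C a => simp [lineφ]
  | add p q hp hq => simp [hp, hq]
  | mul_X p i hp =>
    rw [map_mul, Polynomial.eval_mul, hp, lineφ_X, map_mul, MvPolynomial.eval_X]
    simp only [Polynomial.eval_mul, Polynomial.eval_C, Polynomial.eval_X, Pi.smul_apply,
      smul_eq_mul]
    ring

lemma lineφ_derivative {K : Type*} [CommSemiring K] {n : ℕ} (b : Fin n → K)
    (P : MvPolynomial (Fin n) K) :
    Polynomial.derivative (lineφ b P) = ∑ k, Polynomial.C (b k) * lineφ b (pderiv k P) := by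
  induction P using MvPolynomial.induction_on with
  | C a => simp [lineφ]
  | add p q hp hq => simp [hp, hq, Finset.sum_add_distrib, mul_add]
  | mul_X p i hp =>
    rw [map_mul, Polynomial.derivative_mul, hp, lineφ_X]
    have key : ∀ k : Fin n, Polynomial.C (b k) * lineφ b ((pderiv k) (p * MvPolynomial.X i))
        = (Polynomial.C (b k) * lineφ b (pderiv k p)) * (Polynomial.C (b i) * Polynomial.X)
          + (if k = i then Polynomial.C (b i) * lineφ b p else 0) := by
      intro k
      rw [pderiv_mul, map_add, map_mul, lineφ_X, mul_add]
      by_cases h : k = i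
      · subst h
        rw [MvPolynomial.pderiv_X_self, mul_one, if_pos rfl]
        ring
      · rw [MvPolynomial.pderiv_X_of_ne (Ne.symm h), mul_zero, map_zero, if_neg h]
        ring
    rw [Finset.sum_congr rfl fun k _ => key k, Finset.sum_add_distrib, Finset.sum_ite_eq']
    simp only [Finset.mem_univ, if_pos]
    rw [Finset.sum_mul]
    have : Polynomial.derivative (Polynomial.C (b i) * Polynomial.X) = Polynomial.C (b i) := by
      simp
    rw [this]
    ring

lemma lineφ_monomial {K : Type*} [CommSemiring K] {n : ℕ} (b : Fin n → K)
    (m : Fin n →₀ ℕ) (c : K) :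
    lineφ b (monomial m c) = Polynomial.C (c * m.prod fun k e => b k ^ e)
      * Polynomial.X ^ (m.sum fun _ e => e) := by
  rw [lineφ, MvPolynomial.aeval_monomial]
  rw [show (algebraMap K (Polynomial K)) c = Polynomial.C c from rfl]
  rw [Finsupp.prod, Finsupp.prod, Finsupp.sum]
  rw [show (∏ k ∈ m.support, (Polynomial.C (b k) * Polynomial.X) ^ m k)
      = ∏ k ∈ m.support, (Polynomial.C (b k ^ m k) * Polynomial.X ^ m k) by
    refine Finset.prod_congr rfl fun k _ => ?_
    rw [mul_pow, Polynomial.C_pow]]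
  rw [Finset.prod_mul_distrib, Finset.prod_pow_eq_pow_sum,
    show Polynomial.C (c * ∏ a ∈ m.support, b a ^ m a)
      = Polynomial.C c * ∏ a ∈ m.support, Polynomial.C (b a ^ m a) by rw [map_mul, map_prod],
    mul_assoc]

lemma lineφ_support {K : Type*} [CommSemiring K] {n : ℕ} (b : Fin n → K)
    (P : MvPolynomial (Fin n) K) (e : ℕ) (he : ∀ m ∈ P.support, (m.sum fun _ e => e) ≠ e) :
    (lineφ b P).coeff e = 0 := by
  conv_lhs => rw [MvPolynomial.as_sum P]
  rw [map_sum, Polynomial.finset_sum_coeff]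
  refine Finset.sum_eq_zero fun m hm => ?_
  rw [lineφ_monomial, Polynomial.coeff_C_mul, Polynomial.coeff_X_pow,
    if_neg (fun h => he m hm h.symm), mul_zero]

/-- A polynomial supported in the image of an injective exponent list equals the
corresponding sum of monomials. -/
lemma poly_eq_sum_of_support {K : Type*} [Field K] {r : ℕ} (u : Polynomial K)
    (f : Fin r → ℕ) (hf : Function.Injective f)
    (hsupp : ∀ e ∈ u.support, ∃ j, e = f j) :
    u = ∑ j, Polynomial.C (u.coeff (f j)) * Polynomial.X ^ (f j) := by
  ext e
  rw [Polynomial.finset_sum_coeff]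
  simp only [Polynomial.coeff_C_mul, Polynomial.coeff_X_pow, mul_ite, mul_one, mul_zero]
  by_cases he : ∃ j, e = f j
  · obtain ⟨j0, rfl⟩ := he
    rw [Finset.sum_eq_single j0]
    · rw [if_pos rfl]
    · intro j _ hj
      rw [if_neg (fun h : f j0 = f j => hj (hf h).symm)]
    · intro h; exact absurd (Finset.mem_univ j0) h
  · rw [Finset.sum_eq_zero fun j _ => if_neg (fun h : e = f j => he ⟨j, h⟩)]
    exact Polynomial.notMem_support_iff.1 (fun hc => he (hsupp e hc))

/-- Kernel lemma from full rank. -/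
lemma ker_of_rank {K : Type*} [Field K] {r : ℕ} (A : Matrix (Fin r) (Fin r) K)
    (hV : A.rank = r) (γ : Fin r → K) (h : ∀ i, ∑ j, γ j * A j i = 0) : γ = 0 := by
  have hAT : A.transpose.rank = r := by rw [Matrix.rank_transpose]; exact hV
  have h2 : A.transpose.mulVec γ = 0 := by
    funext i
    rw [Matrix.mulVec_transpose]
    simpa [Matrix.vecMul, dotProduct] using h i
  have hker : LinearMap.ker A.transpose.mulVecLin = ⊥ := by
    have := LinearMap.finrank_range_add_finrank_ker A.transpose.mulVecLin
    rw [show Module.finrank K (LinearMap.range A.transpose.mulVecLin) = r from hAT] at this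
    simp only [Module.finrank_pi, Fintype.card_fin] at this
    have : Module.finrank K (LinearMap.ker A.transpose.mulVecLin) = 0 := by omega
    exact Submodule.finrank_eq_zero.1 this
  have : γ ∈ LinearMap.ker A.transpose.mulVecLin := by
    rw [LinearMap.mem_ker, Matrix.mulVecLin_apply, h2]
  rw [hker] at this
  exact this

/-- Surjectivity from full rank. -/
lemma surj_of_rank {K : Type*} [Field K] {r : ℕ} (A : Matrix (Fin r) (Fin r) K)
    (hV : A.rank = r) (v : Fin r → K) : ∃ γ : Fin r → K, ∀ i, ∑ j, γ j * A j i = v i := by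
  have hAT : A.transpose.rank = r := by rw [Matrix.rank_transpose]; exact hV
  have hinj : Function.Injective A.transpose.mulVecLin := by
    rw [← LinearMap.ker_eq_bot]
    have := LinearMap.finrank_range_add_finrank_ker A.transpose.mulVecLin
    rw [show Module.finrank K (LinearMap.range A.transpose.mulVecLin) = r from hAT] at this
    simp only [Module.finrank_pi, Fintype.card_fin] at this
    have : Module.finrank K (LinearMap.ker A.transpose.mulVecLin) = 0 := by omega
    exact Submodule.finrank_eq_zero.1 this
  have hsurj : Function.Surjective A.transpose.mulVecLin :=
    LinearMap.injective_iff_surjective.1 hinj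
  obtain ⟨γ, hγ⟩ := hsurj v
  refine ⟨γ, fun i => ?_⟩
  have := congrFun hγ i
  rw [Matrix.mulVecLin_apply, Matrix.mulVec_transpose] at this
  simpa [Matrix.vecMul, dotProduct] using this

/-- If all terms of `F : Kⁿ → Kⁿ` have degree in `{d₁, …, d_{r+1}} ∋ 0`
with `d_{r+1}` the largest, `d_{r+1} ≠ 1`, `char K ∤ d_{r+1}` (i.e. `d_{r+1}` is a unit
in `K`), `b ≠ 0`, `F(a₁b) = ⋯ = F(a_r b)` and the generalized Vandermonde matrix has
rank `r`, then `det jac F` is not a nonzero constant. -/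
theorem jacobian_det_not_constant_of_equal_values_on_line
    {K : Type*} [Field K] {n r : ℕ}
    (F : Fin n → MvPolynomial (Fin n) K) (d : Fin (r + 1) → ℕ)
    (h0 : ∃ j, d j = 0)
    (hmax : ∀ j, d j ≤ d (Fin.last r))
    (hne1 : d (Fin.last r) ≠ 1)
    (hchar : (d (Fin.last r) : K) ≠ 0)
    (hdeg : ∀ i, ∀ mo ∈ (F i).support, ∃ j, (mo.sum fun _ e => e) = d j)
    (b : Fin n → K) (hb : b ≠ 0) (a : Fin r → K)
    (hFa : ∀ i j : Fin r,
      (fun k => eval (a i • b) (F k)) = fun k => eval (a j • b) (F k))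
    (hV : (Matrix.of fun i j : Fin r => a j ^ d i.castSucc).rank = r) :
    ¬ ∃ c : K, c ≠ 0 ∧ (Matrix.of fun i j => pderiv j (F i)).det = C c := by
  rintro ⟨c, hc, hdet⟩
  set D := d (Fin.last r) with hDdef
  have hD0 : D ≠ 0 := by
    intro h
    exact hchar (by rw [h]; simp)
  have hD2 : 2 ≤ D := by
    have := hne1
    omega
  -- 0 occurs among the first r exponents
  obtain ⟨jz, hjz⟩ : ∃ j : Fin r, d j.castSucc = 0 := by
    obtain ⟨j0, hj0⟩ := h0
    rcases Fin.eq_castSucc_or_eq_last j0 with ⟨j, rfl⟩ | rfl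
    · exact ⟨j, hj0⟩
    · exact absurd hj0 hD0
  -- kernel lemma specialized
  have KL : ∀ γ : Fin r → K, (∀ i, ∑ j, γ j * a i ^ d j.castSucc = 0) → γ = 0 := by
    intro γ hγ
    exact ker_of_rank _ hV γ (fun i => hγ i)
  -- injectivity of the exponents
  have hinj : Function.Injective (fun j : Fin r => d j.castSucc) := by
    intro i i' h
    by_contra hne
    have h' : d i.castSucc = d i'.castSucc := h
    have := KL (Pi.single i 1 - Pi.single i' 1) (fun k => by
      simp only [Pi.sub_apply, sub_mul, Finset.sum_sub_distrib, Pi.single_apply, ite_mul,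
        one_mul, zero_mul, Finset.sum_ite_eq', Finset.mem_univ, if_true]
      rw [h', sub_self])
    have h1 : (Pi.single i 1 - Pi.single i' 1 : Fin r → K) i = 0 := by rw [this]; rfl
    simp [Pi.single_apply, Ne.symm hne] at h1
  -- support of the line restriction
  have supp_h : ∀ (l : Fin n) (e : ℕ), (lineφ b (F l)).coeff e ≠ 0 →
      (∃ j : Fin r, e = d j.castSucc) ∨ e = D := by
    intro l e he
    by_contra hcon
    push_neg at hcon
    refine he (lineφ_support b (F l) e fun m hm hsum => ?_)
    obtain ⟨j, hj⟩ := hdeg l m hm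
    rcases Fin.eq_castSucc_or_eq_last j with ⟨j', rfl⟩ | rfl
    · exact hcon.1 j' (by rw [← hsum, hj])
    · exact hcon.2 (by rw [← hsum, hj])
  -- common values
  set w : Fin n → K := fun l => MvPolynomial.eval (a jz • b) (F l) with hw
  have heval : ∀ (i : Fin r) (l : Fin n), Polynomial.eval (a i) (lineφ b (F l)) = w l := by
    intro i l
    rw [lineφ_eval]
    exact congrFun (hFa i jz) l
  -- the key claim: a common root of all derivatives in the algebraic closure
  have key : ∃ t : AlgebraicClosure K, ∀ l,
      Polynomial.aeval t (Polynomial.derivative (lineφ b (F l))) = 0 := by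
    by_cases hDS : ∃ j : Fin r, d j.castSucc = D
    · -- all line restrictions are constant
      refine ⟨0, fun l => ?_⟩
      have hu : lineφ b (F l) - Polynomial.C (w l) = 0 := by
        set u := lineφ b (F l) - Polynomial.C (w l) with hu
        have hsupp : ∀ e ∈ u.support, ∃ j : Fin r, e = d j.castSucc := by
          intro e he
          rw [Polynomial.mem_support_iff] at he
          by_contra hcon
          push_neg at hcon
          have he0 : e ≠ 0 := fun h => hcon jz (by rw [h, hjz])
          have heD : e ≠ D := fun h => (hcon (hDS.choose) (by rw [h, hDS.choose_spec])).elim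
          have : (lineφ b (F l)).coeff e = 0 := by
            by_contra hc2
            rcases supp_h l e hc2 with ⟨j, hj⟩ | hj
            · exact hcon j hj
            · exact heD hj
          rw [hu] at he
          simp [Polynomial.coeff_sub, this, Polynomial.coeff_C, he0] at he
        have hrep := poly_eq_sum_of_support u _ hinj hsupp
        have hγ : (fun j : Fin r => u.coeff (d j.castSucc)) = 0 := by
          refine KL _ fun i => ?_
          have : Polynomial.eval (a i) u = 0 := by
            rw [hu, Polynomial.eval_sub, heval i l, Polynomial.eval_C, sub_self]
          rw [hrep, Polynomial.eval_finset_sum] at this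
          simpa using this
        rw [hrep]
        refine Finset.sum_eq_zero fun j _ => ?_
        rw [show u.coeff (d j.castSucc) = 0 from congrFun hγ j]
        simp
      have : lineφ b (F l) = Polynomial.C (w l) := by
        have := sub_eq_zero.mp hu
        exact this
      rw [this]
      simp
    · -- construct q
      push_neg at hDS
      obtain ⟨γq, hγq⟩ := surj_of_rank _ hV (fun i => -(a i ^ D))
      set q : Polynomial K :=
        Polynomial.X ^ D + ∑ j, Polynomial.C (γq j) * Polynomial.X ^ (d j.castSucc) with hq
      clear_value q
      have hqeval : ∀ i, Polynomial.eval (a i) q = 0 := by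
        intro i
        rw [hq]
        simp only [Polynomial.eval_add, Polynomial.eval_pow, Polynomial.eval_X,
          Polynomial.eval_finset_sum, Polynomial.eval_mul, Polynomial.eval_C]
        have := hγq i
        simp only [Matrix.of_apply] at this
        rw [this]
        ring
      have hqD : q.coeff D = 1 := by
        rw [hq]
        rw [Polynomial.coeff_add, Polynomial.coeff_X_pow, if_pos rfl,
          Polynomial.finset_sum_coeff]
        rw [Finset.sum_eq_zero fun j _ => ?_]
        · ring
        · rw [Polynomial.coeff_C_mul, Polynomial.coeff_X_pow,
            if_neg (fun h : D = d j.castSucc => hDS j h.symm), mul_zero]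
      have hqe : ∀ e, e ≠ D → (∀ j : Fin r, e ≠ d j.castSucc) → q.coeff e = 0 := by
        intro e heD hejs
        rw [hq, Polynomial.coeff_add, Polynomial.coeff_X_pow, if_neg (fun h => heD h),
          Polynomial.finset_sum_coeff, Finset.sum_eq_zero fun j _ => ?_]
        · ring
        · rw [Polynomial.coeff_C_mul, Polynomial.coeff_X_pow,
            if_neg (fun h : e = d j.castSucc => hejs j h), mul_zero]
      -- each line restriction is w l + c_l q
      have hlq : ∀ l, lineφ b (F l) = Polynomial.C (w l)
          + Polynomial.C ((lineφ b (F l)).coeff D) * q := by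
        intro l
        set cl := (lineφ b (F l)).coeff D with hcl
        set u := lineφ b (F l) - Polynomial.C (w l) - Polynomial.C cl * q with hu
        have hsupp : ∀ e ∈ u.support, ∃ j : Fin r, e = d j.castSucc := by
          intro e he
          rw [Polynomial.mem_support_iff] at he
          by_contra hcon
          push_neg at hcon
          have he0 : e ≠ 0 := fun h => hcon jz (by rw [h, hjz])
          refine he ?_
          by_cases heD : e = D
          · subst heD
            rw [hu, Polynomial.coeff_sub, Polynomial.coeff_sub, Polynomial.coeff_C_mul, hqD,
              Polynomial.coeff_C, if_neg hD0, mul_one]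
            ring
          · have hcoeff : (lineφ b (F l)).coeff e = 0 := by
              by_contra hc2
              rcases supp_h l e hc2 with ⟨j, hj⟩ | hj
              · exact hcon j hj
              · exact heD hj
            rw [hu, Polynomial.coeff_sub, Polynomial.coeff_sub, Polynomial.coeff_C_mul,
              hqe e heD (fun j h => hcon j h), Polynomial.coeff_C, if_neg he0, hcoeff]
            ring
        have hrep := poly_eq_sum_of_support u _ hinj hsupp
        have hγ : (fun j : Fin r => u.coeff (d j.castSucc)) = 0 := by
          refine KL _ fun i => ?_
          have : Polynomial.eval (a i) u = 0 := by
            rw [hu, Polynomial.eval_sub, Polynomial.eval_sub, heval i l, Polynomial.eval_C,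
              Polynomial.eval_mul, Polynomial.eval_C, hqeval i, mul_zero, sub_zero, sub_self]
          rw [hrep, Polynomial.eval_finset_sum] at this
          simpa using this
        have hu0 : u = 0 := by
          rw [hrep]
          refine Finset.sum_eq_zero fun j _ => ?_
          rw [show u.coeff (d j.castSucc) = 0 from congrFun hγ j]
          simp
        rw [hu] at hu0
        linear_combination hu0
      -- derivative of q is nonconstant
      have hq' : (Polynomial.derivative q).coeff (D - 1) = (D : K) := by
        rw [hq, map_add, Polynomial.derivative_X_pow, Polynomial.coeff_add,
          Polynomial.coeff_C_mul, Polynomial.coeff_X_pow, if_pos rfl, mul_one, map_sum,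
          Polynomial.finset_sum_coeff, Finset.sum_eq_zero fun j _ => ?_]
        · ring
        · rw [Polynomial.derivative_C_mul, Polynomial.derivative_X_pow,
            Polynomial.coeff_C_mul, Polynomial.coeff_C_mul, Polynomial.coeff_X_pow]
          by_cases hj0 : d j.castSucc = 0
          · simp [hj0]
          · rw [if_neg, mul_zero, mul_zero]
            intro hcon
            have : d j.castSucc = D := by omega
            exact hDS j this
      have hdeg' : (Polynomial.derivative q).degree ≠ 0 := by
        have h1 : ((D - 1 : ℕ) : WithBot ℕ) ≤ (Polynomial.derivative q).degree :=
          Polynomial.le_degree_of_ne_zero (by rw [hq']; exact hchar)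
        intro hcon
        rw [hcon] at h1
        have : (D - 1 : ℕ) ≤ 0 := by exact_mod_cast h1
        omega
      -- root in the algebraic closure
      set p := (Polynomial.derivative q).map (algebraMap K (AlgebraicClosure K)) with hp
      have hpdeg : p.degree ≠ 0 := by
        rw [hp, Polynomial.degree_map]
        exact hdeg'
      obtain ⟨t, ht⟩ := IsAlgClosed.exists_root p hpdeg
      refine ⟨t, fun l => ?_⟩
      have : Polynomial.aeval t (Polynomial.derivative q) = 0 := by
        rw [Polynomial.aeval_def, ← Polynomial.eval_map]
        exact ht
      rw [hlq l, map_add, Polynomial.derivative_C, Polynomial.derivative_C_mul, zero_add,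
        map_mul, this, mul_zero]
  -- final contradiction
  obtain ⟨t, ht⟩ := key
  set ψ : MvPolynomial (Fin n) K →+* AlgebraicClosure K :=
    ((Polynomial.aeval t).toRingHom.comp (lineφ b).toRingHom) with hψ
  set M : Matrix (Fin n) (Fin n) (AlgebraicClosure K) :=
    ψ.mapMatrix (Matrix.of fun l k => pderiv k (F l)) with hM
  have hdetM : M.det = algebraMap K (AlgebraicClosure K) c := by
    rw [hM, ← RingHom.map_det, hdet, hψ]
    simp only [RingHom.comp_apply, AlgHom.toRingHom_eq_coe, RingHom.coe_coe]
    rw [show (lineφ b) (MvPolynomial.C c) = Polynomial.C c from by simp [lineφ]]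
    rw [Polynomial.aeval_C]
  have hMunit : IsUnit M.det := by
    rw [hdetM]
    rw [isUnit_iff_ne_zero]
    intro hcon
    exact hc ((RingHom.injective (algebraMap K (AlgebraicClosure K))) (by simpa using hcon))
  have hMb : M.mulVec (fun k => algebraMap K (AlgebraicClosure K) (b k)) = 0 := by
    funext l
    have hder : Polynomial.aeval t (Polynomial.derivative (lineφ b (F l))) = 0 := ht l
    rw [lineφ_derivative, map_sum] at hder
    simp only [map_mul, Polynomial.aeval_C] at hder
    have hcomp : (M.mulVec (fun k => algebraMap K (AlgebraicClosure K) (b k))) l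
        = ∑ k, (algebraMap K (AlgebraicClosure K)) (b k)
            * Polynomial.aeval t (lineφ b (pderiv k (F l))) := by
      rw [Matrix.mulVec]
      simp only [dotProduct, hM, RingHom.mapMatrix_apply, Matrix.map_apply,
        Matrix.of_apply, hψ, RingHom.comp_apply, AlgHom.toRingHom_eq_coe, RingHom.coe_coe]
      exact Finset.sum_congr rfl fun k _ => mul_comm _ _
    rw [show (0 : Fin n → AlgebraicClosure K) l = 0 from rfl, hcomp, hder]
  have hbz : (fun k => algebraMap K (AlgebraicClosure K) (b k)) = 0 := by
    have h1 : M⁻¹.mulVec (M.mulVec (fun k => algebraMap K (AlgebraicClosure K) (b k)))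
        = (fun k => algebraMap K (AlgebraicClosure K) (b k)) := by
      rw [Matrix.mulVec_mulVec, Matrix.nonsing_inv_mul _ hMunit, Matrix.one_mulVec]
    rw [hMb, Matrix.mulVec_zero] at h1
    exact h1.symm
  refine hb (funext fun k => ?_)
  have := congrFun hbz k
  exact (RingHom.injective (algebraMap K (AlgebraicClosure K))) (by simpa using this)
end

section
/- Let K be a field and let F: K^n → K^n be an invertible polynomial map. If the K-vector space ker jac(F − x) ∩ K^n = {v ∈ K^n : (jac(F − x))·v = 0} has dimension n − r, then there exists T ∈ GL_n(K) such that the polynomial map G := T^{-1} F(Tx) satisfies ker jac(G − x) ∩ K^n = {0}^r × K^{n−r}. Moreover G is invertible and the degree of its inverse equals the degree of the inverse of F. -/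
/-!
By the chain rule, the derivative of `G = T⁻¹F(Tx)` in a constant direction `v` is `T⁻¹` times
the derivative of `F` in direction `Tv`, evaluated at `Tx`; since also `T⁻¹(Tx) = x`, this gives
`ker jac(G - x) ∩ Kⁿ = T⁻¹(ker jac(F - x) ∩ Kⁿ)`. The subspaces `{0}ʳ × K^{n-r}` and
`ker jac(F - x) ∩ Kⁿ` have the same dimension, so some `T ∈ GLₙ(K)` maps the first onto the second.
Under substitution, `G` corresponds to the conjugate of the substitution endomorphism of `F` by that
of `x ↦ Tx`, so `T⁻¹F⁻¹(Tx)` inverts `G`; a linear substitution does not raise total degrees and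
conjugating back by `T⁻¹` undoes it, so this inverse has the degree of `F⁻¹`.
-/

open MvPolynomial

/-- `G` is the inverse of the polynomial map `F` (composition in both orders is the
identity). -/
def IsPolyInverse {K : Type*} [CommSemiring K] {n : ℕ}
    (G F : Fin n → MvPolynomial (Fin n) K) : Prop :=
  (∀ i, bind₁ F (G i) = X i) ∧ (∀ i, bind₁ G (F i) = X i)

/-- The `K`-vector space `ker jac H ∩ Kⁿ` of constant vectors `v ∈ Kⁿ` such that
`(jac H) · v = 0`. -/
noncomputable def kerJac {K : Type*} [Field K] {n : ℕ}
    (H : Fin n → MvPolynomial (Fin n) K) : Submodule K (Fin n → K) :=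
  LinearMap.ker
    ((((Matrix.of fun i j => pderiv j (H i)).mulVecLin).restrictScalars K).comp
      ((Algebra.linearMap K (MvPolynomial (Fin n) K)).compLeft (Fin n)))

/-- The linear conjugate `T⁻¹ ∘ F ∘ T` of a polynomial map `F` by `T ∈ GLₙ(K)`. -/
noncomputable def conjMap {K : Type*} [Field K] {n : ℕ}
    (T : Matrix (Fin n) (Fin n) K) (F : Fin n → MvPolynomial (Fin n) K) :
    Fin n → MvPolynomial (Fin n) K :=
  fun i => ∑ j, C (T⁻¹ i j) * bind₁ (fun k => ∑ l, C (T k l) * X l) (F j)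

open Module
open scoped Matrix

theorem Submodule.exists_linearEquiv_map_eq_of_finrank_eq {K V : Type*} [Field K]
    [AddCommGroup V] [Module K V] [FiniteDimensional K V] {W₁ W₂ : Submodule K V}
    (h : finrank K W₁ = finrank K W₂) : ∃ e : V ≃ₗ[K] V, W₁.map (e : V →ₗ[K] V) = W₂ := by
  obtain ⟨C₁, hC₁⟩ := W₁.exists_isCompl
  obtain ⟨C₂, hC₂⟩ := W₂.exists_isCompl
  have hC : finrank K C₁ = finrank K C₂ := by
    have := Submodule.finrank_add_eq_of_isCompl hC₁
    have := Submodule.finrank_add_eq_of_isCompl hC₂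
    omega
  let e := (W₁.prodEquivOfIsCompl C₁ hC₁).symm ≪≫ₗ
    ((LinearEquiv.ofFinrankEq _ _ h).prodCongr (LinearEquiv.ofFinrankEq _ _ hC)) ≪≫ₗ
    W₂.prodEquivOfIsCompl C₂ hC₂
  refine ⟨e, Submodule.eq_of_le_of_finrank_eq ?_ (by rw [LinearEquiv.finrank_map_eq, h])⟩
  rintro _ ⟨x, hx, rfl⟩
  have hx₁ : (W₁.prodEquivOfIsCompl C₁ hC₁).symm x = (⟨x, hx⟩, 0) :=
    Submodule.prodEquivOfIsCompl_symm_apply_left _ _ hC₁ ⟨x, hx⟩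
  simp [e, hx₁]

theorem finrank_ker_funLeft_subtypeVal {K ι : Type*} [Field K] [Fintype ι] (p : ι → Prop)
    [DecidablePred p] :
    finrank K (LinearMap.ker (LinearMap.funLeft K K ((↑) : {i // p i} → ι))) =
      Fintype.card ι - Fintype.card {i // p i} := by
  let f := LinearMap.funLeft K K ((↑) : {i // p i} → ι)
  have hrange : LinearMap.range f = ⊤ :=
    LinearMap.range_eq_top.2 (LinearMap.funLeft_surjective_of_injective K K _ Subtype.val_injective)
  have := LinearMap.finrank_range_add_finrank_ker f
  rw [hrange, finrank_top, finrank_fintype_fun_eq_card,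
    finrank_fintype_fun_eq_card] at this
  change finrank K (LinearMap.ker f) = _
  omega

theorem exists_isUnit_det_mulVec_mem_iff {K : Type*} [Field K] {n r : ℕ}
    (W : Submodule K (Fin n → K)) (hW : finrank K W = n - r) :
    ∃ T : Matrix (Fin n) (Fin n) K, IsUnit T.det ∧
      ∀ v : Fin n → K, T *ᵥ v ∈ W ↔ ∀ i : Fin n, (i : ℕ) < r → v i = 0 := by
  let W₀ := LinearMap.ker (LinearMap.funLeft K K ((↑) : {i : Fin n // (i : ℕ) < r} → Fin n))
  have hW₀ : finrank K W₀ = finrank K W := by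
    rw [finrank_ker_funLeft_subtypeVal, hW, Fintype.card_subtype, Fin.card_filter_val_lt,
      Fintype.card_fin]
    omega
  obtain ⟨e, he⟩ := Submodule.exists_linearEquiv_map_eq_of_finrank_eq hW₀
  refine ⟨LinearMap.toMatrix' e, ?_, fun v => ?_⟩
  · simpa [LinearMap.toMatrix_eq_toMatrix'] using e.isUnit_det (Pi.basisFun K _) (Pi.basisFun K _)
  · rw [LinearMap.toMatrix'_mulVec, ← he, Submodule.map_equiv_eq_comap_symm]
    simp [W₀, funext_iff]

namespace MvPolynomial

variable {R σ τ : Type*} [CommSemiring R]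

theorem totalDegree_bind₁_le {f : σ → MvPolynomial τ R} {d : ℕ}
    (hf : ∀ i, (f i).totalDegree ≤ d) (p : MvPolynomial σ R) :
    (bind₁ f p).totalDegree ≤ d * p.totalDegree := by
  conv_lhs => rw [p.as_sum]
  rw [map_sum]
  refine totalDegree_finsetSum_le fun s hs => ?_
  rw [bind₁_monomial]
  calc (C (coeff s p) * s.prod fun i k => f i ^ k).totalDegree
      ≤ (C (coeff s p)).totalDegree + ∑ i ∈ s.support, (f i ^ s i).totalDegree :=
        (totalDegree_mul _ _).trans (Nat.add_le_add_left (totalDegree_finsetProd _ _) _)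
    _ ≤ 0 + ∑ i ∈ s.support, d * s i := by
        rw [totalDegree_C]
        gcongr with i
        exact (totalDegree_pow _ _).trans (by rw [mul_comm]; exact Nat.mul_le_mul_right _ (hf i))
    _ ≤ d * p.totalDegree := by
        rw [zero_add, ← Finset.mul_sum]
        exact Nat.mul_le_mul_left d (le_totalDegree hs)

variable [Fintype σ]

theorem bind₁_toMvPolynomial_comp (M N : Matrix σ σ R) :
    (bind₁ M.toMvPolynomial).comp (bind₁ N.toMvPolynomial) = bind₁ (N * M).toMvPolynomial := by
  rw [bind₁_comp_bind₁]
  congr 1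
  funext i
  rw [Matrix.toMvPolynomial_mul]

theorem bind₁_toMvPolynomial_comp_of_mul_eq_one [DecidableEq σ] {M N : Matrix σ σ R}
    (h : N * M = 1) :
    (bind₁ M.toMvPolynomial).comp (bind₁ N.toMvPolynomial) = AlgHom.id R _ := by
  rw [bind₁_toMvPolynomial_comp, h, Matrix.toMvPolynomial_one, bind₁_X_left]

noncomputable def dirDeriv (v : σ → R) : Derivation R (MvPolynomial σ R) (MvPolynomial σ R) :=
  ∑ j, v j • pderiv j

theorem dirDeriv_apply (v : σ → R) (p : MvPolynomial σ R) :
    dirDeriv v p = ∑ j, v j • pderiv j p := by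
  rw [dirDeriv, ← Derivation.coeFnAddMonoidHom_apply, map_sum, Finset.sum_apply]
  rfl

theorem dirDeriv_X (v : σ → R) (i : σ) : dirDeriv v (X i) = C (v i) := by
  classical
  simp [dirDeriv_apply, pderiv_X, Pi.single_apply, smul_eq_C_mul]

theorem dirDeriv_toMvPolynomial (M : Matrix σ σ R) (v : σ → R) (i : σ) :
    dirDeriv v (M.toMvPolynomial i) = C ((M *ᵥ v) i) := by
  simp [Matrix.toMvPolynomial, ← C_mul_X_eq_monomial, dirDeriv_X, Matrix.mulVec, dotProduct]

theorem dirDeriv_bind₁_toMvPolynomial (M : Matrix σ σ R) (v : σ → R) (p : MvPolynomial σ R) :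
    dirDeriv v (bind₁ M.toMvPolynomial p) = bind₁ M.toMvPolynomial (dirDeriv (M *ᵥ v) p) := by
  induction p using MvPolynomial.induction_on with
  | C a => simp
  | add p q hp hq => simp only [map_add, hp, hq]
  | mul_X p i hp =>
    simp only [map_mul, Derivation.leibniz, bind₁_X_right, hp, dirDeriv_toMvPolynomial,
      dirDeriv_X, smul_eq_mul, map_add, bind₁_C_right]

end MvPolynomial

theorem isPolyInverse_iff {R : Type*} [CommSemiring R] {n : ℕ}
    {G F : Fin n → MvPolynomial (Fin n) R} :
    IsPolyInverse G F ↔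
      (bind₁ F).comp (bind₁ G) = AlgHom.id R _ ∧ (bind₁ G).comp (bind₁ F) = AlgHom.id R _ := by
  simp only [IsPolyInverse, MvPolynomial.algHom_ext_iff, AlgHom.comp_apply, bind₁_X_right,
    AlgHom.id_apply]

section conjMap

variable {K : Type*} [Field K] {n : ℕ}

theorem conjMap_apply (T : Matrix (Fin n) (Fin n) K) (F : Fin n → MvPolynomial (Fin n) K)
    (i : Fin n) :
    conjMap T F i = bind₁ T.toMvPolynomial (bind₁ F (T⁻¹.toMvPolynomial i)) := by
  have hT : (fun k => ∑ l, C (T k l) * X l) = T.toMvPolynomial := by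
    funext k
    simp only [Matrix.toMvPolynomial, C_mul_X_eq_monomial]
  simp [conjMap, hT, Matrix.toMvPolynomial, ← C_mul_X_eq_monomial]

theorem bind₁_conjMap (T : Matrix (Fin n) (Fin n) K) (F : Fin n → MvPolynomial (Fin n) K) :
    bind₁ (conjMap T F) =
      (bind₁ T.toMvPolynomial).comp ((bind₁ F).comp (bind₁ T⁻¹.toMvPolynomial)) := by
  ext1 i
  simp [conjMap_apply]

theorem conjMap_conjMap (S T : Matrix (Fin n) (Fin n) K) (G : Fin n → MvPolynomial (Fin n) K) :
    conjMap S (conjMap T G) = conjMap (T * S) G := by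
  funext i
  rw [conjMap_apply, bind₁_conjMap, conjMap_apply, Matrix.mul_inv_rev, Matrix.toMvPolynomial_mul,
    ← bind₁_toMvPolynomial_comp]
  rfl

theorem conjMap_one (G : Fin n → MvPolynomial (Fin n) K) : conjMap 1 G = G := by
  funext i
  simp [conjMap_apply]

theorem conjMap_inv_conjMap {T : Matrix (Fin n) (Fin n) K} (hT : IsUnit T.det)
    (G : Fin n → MvPolynomial (Fin n) K) : conjMap T⁻¹ (conjMap T G) = G := by
  rw [conjMap_conjMap, Matrix.mul_nonsing_inv T hT, conjMap_one]

theorem isPolyInverse_conjMap {T : Matrix (Fin n) (Fin n) K} (hT : IsUnit T.det)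
    {G F : Fin n → MvPolynomial (Fin n) K} (h : IsPolyInverse G F) :
    IsPolyInverse (conjMap T G) (conjMap T F) := by
  have hQP := bind₁_toMvPolynomial_comp_of_mul_eq_one (Matrix.mul_nonsing_inv T hT)
  have hPQ := bind₁_toMvPolynomial_comp_of_mul_eq_one (Matrix.nonsing_inv_mul T hT)
  have conj_id : ∀ A B : Fin n → MvPolynomial (Fin n) K,
      (bind₁ A).comp (bind₁ B) = AlgHom.id K _ →
        (bind₁ (conjMap T A)).comp (bind₁ (conjMap T B)) = AlgHom.id K _ := by
    intro A B hAB
    rw [bind₁_conjMap, bind₁_conjMap, AlgHom.comp_assoc, AlgHom.comp_assoc,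
      ← AlgHom.comp_assoc (bind₁ T⁻¹.toMvPolynomial), hQP, AlgHom.id_comp,
      ← AlgHom.comp_assoc (bind₁ A), hAB, AlgHom.id_comp, hPQ]
  rw [isPolyInverse_iff] at h ⊢
  exact ⟨conj_id F G h.1, conj_id G F h.2⟩

theorem sup_totalDegree_conjMap_le (T : Matrix (Fin n) (Fin n) K)
    (G : Fin n → MvPolynomial (Fin n) K) :
    (Finset.univ.sup fun i => (conjMap T G i).totalDegree) ≤
      Finset.univ.sup fun i => (G i).totalDegree := by
  set d := Finset.univ.sup fun i => (G i).totalDegree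
  have hG : ∀ j, (G j).totalDegree ≤ d :=
    fun j => Finset.le_sup (f := fun i => (G i).totalDegree) (Finset.mem_univ j)
  refine Finset.sup_le fun i _ => ?_
  rw [conjMap_apply]
  calc _ ≤ 1 * (bind₁ G (T⁻¹.toMvPolynomial i)).totalDegree :=
        totalDegree_bind₁_le (Matrix.toMvPolynomial_totalDegree_le T) _
    _ ≤ 1 * (d * 1) := by
        gcongr
        exact (totalDegree_bind₁_le hG _).trans
          (Nat.mul_le_mul_left _ (Matrix.toMvPolynomial_totalDegree_le _ _))
    _ = d := by ring

theorem sup_totalDegree_conjMap {T : Matrix (Fin n) (Fin n) K} (hT : IsUnit T.det)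
    (G : Fin n → MvPolynomial (Fin n) K) :
    (Finset.univ.sup fun i => (conjMap T G i).totalDegree) =
      Finset.univ.sup fun i => (G i).totalDegree := by
  refine le_antisymm (sup_totalDegree_conjMap_le T G) ?_
  conv_lhs => rw [← conjMap_inv_conjMap hT G]
  exact sup_totalDegree_conjMap_le T⁻¹ (conjMap T G)

theorem conjMap_X {T : Matrix (Fin n) (Fin n) K} (hT : IsUnit T.det) : conjMap T X = X := by
  funext i
  rw [conjMap_apply, bind₁_X_left, AlgHom.id_apply, ← Matrix.toMvPolynomial_mul,
    Matrix.nonsing_inv_mul T hT, Matrix.toMvPolynomial_one]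

theorem conjMap_sub_X {T : Matrix (Fin n) (Fin n) K} (hT : IsUnit T.det)
    (F : Fin n → MvPolynomial (Fin n) K) :
    conjMap T (fun i => F i - X i) = fun i => conjMap T F i - X i := by
  conv_rhs => rw [← conjMap_X hT]
  funext i
  simp [conjMap, mul_sub, Finset.sum_sub_distrib]

theorem mem_kerJac_iff (H : Fin n → MvPolynomial (Fin n) K) (v : Fin n → K) :
    v ∈ kerJac H ↔ ∀ i, dirDeriv v (H i) = 0 := by
  simp only [kerJac, LinearMap.mem_ker, funext_iff]
  refine forall_congr' fun i => ?_
  simp [Matrix.mulVec, dotProduct, dirDeriv_apply, smul_eq_C_mul, mul_comm]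

theorem dirDeriv_conjMap (T : Matrix (Fin n) (Fin n) K) (H : Fin n → MvPolynomial (Fin n) K)
    (v : Fin n → K) (i : Fin n) :
    dirDeriv v (conjMap T H i) =
      bind₁ T.toMvPolynomial ((T⁻¹.map C *ᵥ fun j => dirDeriv (T *ᵥ v) (H j)) i) := by
  simp [conjMap_apply, dirDeriv_bind₁_toMvPolynomial, Matrix.toMvPolynomial, Matrix.mulVec,
    dotProduct, ← C_mul_X_eq_monomial, C_mul', mul_comm]

theorem mem_kerJac_conjMap_iff {T : Matrix (Fin n) (Fin n) K} (hT : IsUnit T.det)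
    (H : Fin n → MvPolynomial (Fin n) K) (v : Fin n → K) :
    v ∈ kerJac (conjMap T H) ↔ T *ᵥ v ∈ kerJac H := by
  have hP : Function.Injective (bind₁ T.toMvPolynomial) :=
    Function.LeftInverse.injective (g := bind₁ T⁻¹.toMvPolynomial)
      (DFunLike.congr_fun (bind₁_toMvPolynomial_comp_of_mul_eq_one (Matrix.mul_nonsing_inv T hT)))
  have hU : IsUnit (T⁻¹.map (C : K →+* MvPolynomial (Fin n) K)) :=
    (Matrix.isUnit_nonsing_inv_iff.2 ((Matrix.isUnit_iff_isUnit_det T).2 hT)).map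
      (C : K →+* MvPolynomial (Fin n) K).mapMatrix
  simp only [mem_kerJac_iff, dirDeriv_conjMap, map_eq_zero_iff _ hP]
  simpa only [_root_.funext_iff, Pi.zero_apply] using
    (Matrix.mulVec_injective_of_isUnit hU).eq_iff' (Matrix.mulVec_zero _)

end conjMap

/-- If `F` is an invertible polynomial map and `ker jac(F - x) ∩ Kⁿ`
has dimension `n - r`, then there is `T ∈ GLₙ(K)` such that `G = T⁻¹ F(Tx)` satisfies
`ker jac(G - x) ∩ Kⁿ = {0}ʳ × K^{n-r}`; moreover `G` is invertible and the degree of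
its inverse equals the degree of the inverse of `F`. -/
theorem conjugate_kernel_normal_form
    {K : Type*} [Field K] {n r : ℕ}
    (F Finv : Fin n → MvPolynomial (Fin n) K)
    (hinv : IsPolyInverse Finv F)
    (hker : Module.finrank K (kerJac (fun i => F i - X i)) = n - r) :
    ∃ T : Matrix (Fin n) (Fin n) K, IsUnit T.det ∧
      (∀ v : Fin n → K,
        v ∈ kerJac (fun i => conjMap T F i - X i) ↔ ∀ i : Fin n, (i : ℕ) < r → v i = 0) ∧
      ∃ Ginv : Fin n → MvPolynomial (Fin n) K, IsPolyInverse Ginv (conjMap T F) ∧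
        (Finset.univ.sup fun i => (Ginv i).totalDegree) =
          (Finset.univ.sup fun i => (Finv i).totalDegree) := by
  obtain ⟨T, hT, hTW⟩ := exists_isUnit_det_mulVec_mem_iff _ hker
  refine ⟨T, hT, fun v => ?_, conjMap T Finv, isPolyInverse_conjMap hT hinv,
    sup_totalDegree_conjMap hT Finv⟩
  rw [← conjMap_sub_X hT, mem_kerJac_conjMap_iff hT, hTW]
end

section
/- Let K be a field in which 2 is invertible (characteristic ≠ 2) and let F: K^n → K^n be a polynomial map of degree at most 2 whose Jacobian determinant det jac F does not vanish at any point of K^n. Then F is injective on K^n. -/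
/-!
Restrict to the line `t ↦ b + t (a - b)`: each `F i` becomes a polynomial of degree at most `2`
in `t`, and for such a polynomial the secant slope between `t = 0` and `t = 1` equals the
derivative at `t = 1/2`. By the chain rule, `F a - F b = (jac F)(m) (a - b)` with `m` the midpoint
of `a` and `b`, and `(jac F)(m)` is invertible, so `F a = F b` forces `a = b`.
-/

open MvPolynomial

theorem Polynomial.eval_sub_eval_eq_derivative_eval_midpoint {K : Type*} [Field K]
    (h2 : (2 : K) ≠ 0) {g : Polynomial K} (hg : g.natDegree ≤ 2) (x y : K) :
    g.eval y - g.eval x = (Polynomial.derivative g).eval ((x + y) / 2) * (y - x) := by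
  rw [g.as_sum_range' 3 (by omega)]
  simp only [Finset.sum_range_succ, Finset.sum_range_zero, Polynomial.eval_add,
    Polynomial.derivative_add, Polynomial.eval_monomial, Polynomial.derivative_monomial, zero_add]
  linear_combination g.coeff 2 * (x ^ 2 - y ^ 2) * mul_inv_cancel₀ h2

namespace MvPolynomial

section CommSemiring

variable {R σ : Type*} [CommSemiring R]

theorem derivative_aeval [Fintype σ] (γ : σ → Polynomial R) (p : MvPolynomial σ R) :
    Polynomial.derivative (aeval γ p) =
      ∑ j, aeval γ (pderiv j p) * Polynomial.derivative (γ j) := by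
  classical
  induction p using MvPolynomial.induction_on with
  | C c => simp
  | add p q hp hq => simp only [map_add, hp, hq, add_mul, Finset.sum_add_distrib]
  | mul_X p i hp =>
    simp only [map_mul, aeval_X, Polynomial.derivative_mul, hp, pderiv_mul, pderiv_X, map_add,
      Pi.single_apply, mul_ite, mul_one, mul_zero, apply_ite (aeval γ), map_zero, ite_mul, zero_mul,
      add_mul, Finset.sum_add_distrib, Finset.sum_ite_eq, Finset.mem_univ, if_true, Finset.sum_mul]
    exact congrArg (· + _) (Finset.sum_congr rfl fun _ _ => by ring)

theorem natDegree_aeval_le_totalDegree (γ : σ → Polynomial R) (hγ : ∀ i, (γ i).natDegree ≤ 1)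
    (p : MvPolynomial σ R) : (aeval γ p).natDegree ≤ p.totalDegree := by
  conv_lhs => rw [p.as_sum]
  rw [map_sum]
  refine Polynomial.natDegree_sum_le_of_forall_le _ _ fun d hd => ?_
  rw [aeval_monomial, Polynomial.algebraMap_eq]
  calc _ ≤ (d.prod fun i k => γ i ^ k).natDegree := Polynomial.natDegree_C_mul_le _ _
    _ ≤ ∑ i ∈ d.support, (γ i ^ d i).natDegree := Polynomial.natDegree_prod_le _ _
    _ ≤ ∑ i ∈ d.support, d i := Finset.sum_le_sum fun i _ =>
        Polynomial.natDegree_pow_le.trans (by simpa using Nat.mul_le_mul_left (d i) (hγ i))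
    _ ≤ p.totalDegree := le_totalDegree hd

end CommSemiring

theorem eval_sub_eval_eq_sum_pderiv_midpoint {K σ : Type*} [Field K] [Fintype σ]
    (h2 : (2 : K) ≠ 0) {p : MvPolynomial σ K} (hp : p.totalDegree ≤ 2) (a b : σ → K) :
    eval a p - eval b p = ∑ j, eval (fun k => (a k + b k) / 2) (pderiv j p) * (a j - b j) := by
  set γ : σ → Polynomial K := fun k => Polynomial.C (a k - b k) * Polynomial.X + Polynomial.C (b k)
  have eval_line (t : K) (q : MvPolynomial σ K) :
      (aeval γ q).eval t = eval (fun k => (a k - b k) * t + b k) q := by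
    have h := congrArg (· q) (comp_aeval γ (Polynomial.aeval t))
    simp only [AlgHom.comp_apply, Polynomial.coe_aeval_eq_eval] at h
    simpa [γ] using h
  have hline := Polynomial.eval_sub_eval_eq_derivative_eval_midpoint h2
    ((natDegree_aeval_le_totalDegree γ (fun _ => Polynomial.natDegree_linear_le) p).trans hp) 0 1
  simp only [eval_line, derivative_aeval, Polynomial.eval_finsetSum, Polynomial.eval_mul] at hline
  have hmid : (fun k => (a k - b k) * ((0 + 1) / 2) + b k) = fun k => (a k + b k) / 2 := by
    funext k
    linear_combination -b k * mul_inv_cancel₀ h2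
  rw [hmid] at hline
  simpa [γ] using hline

end MvPolynomial

/-- Over a field in which `2` is invertible, a polynomial map of
degree at most `2` whose Jacobian determinant vanishes nowhere is injective. -/
theorem quadratic_injective_of_nonvanishing_jacobian
    {K : Type*} [Field K] (h2 : (2 : K) ≠ 0) {n : ℕ}
    (F : Fin n → MvPolynomial (Fin n) K)
    (hdeg : ∀ i, (F i).totalDegree ≤ 2)
    (hjac : ∀ v : Fin n → K,
      eval v ((Matrix.of fun i j => pderiv j (F i)).det) ≠ 0) :
    Function.Injective (fun v : Fin n → K => fun i => eval v (F i)) := by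
  intro a b hab
  set J := (eval fun k => (a k + b k) / 2).mapMatrix (Matrix.of fun i j => pderiv j (F i))
  have hJ : J.det ≠ 0 := by
    rw [← RingHom.map_det]
    exact hjac _
  have hJab : J.mulVec (a - b) = 0 := by
    funext i
    simpa [J, Matrix.mulVec, dotProduct, ← eval_sub_eval_eq_sum_pderiv_midpoint h2 (hdeg i),
      sub_eq_zero] using congrFun hab i
  exact sub_eq_zero.mp (Matrix.eq_zero_of_mulVec_eq_zero hJ hJab)
end

section
/- Let K be a field, let d ≥ 2, and let A ∈ Mat_n(K) be lower triangular with zeroes on the diagonal such that all subdiagonal entries A_{i,i−1} (2 ≤ i ≤ n) are nonzero. Then F = x + (Ax)^{*d} is invertible, its inverse G satisfies G_1 = x_1 and G_i = x_i − (A_{i1} G_1 + A_{i2} G_2 + ... + A_{i,i−1} G_{i−1})^d for 2 ≤ i ≤ n, and deg G_i = d^{i−1} for all i; in particular the inverse of F has degree exactly d^{n−1}. -/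
open MvPolynomial

/-!
Since `A` is strictly lower triangular, the `i`-th component of `F = x + (Ax)^{*d}` is
`xᵢ` plus a polynomial in `x₁, …, x_{i-1}`, so `F` is inverted by solving for `xᵢ` one
coordinate at a time, which gives the recursion for `G`. For the degrees, the linear form
`∑_{j<i} A_{ij} G_j` is dominated by its last term `A_{i,i-1} G_{i-1}`, of degree `d^{i-2}`
by induction, since the earlier `G_j` have strictly smaller degree; raising it to the
`d`-th power gives `deg Gᵢ = d^{i-1}`.
-/

namespace MvPolynomial

variable {R σ : Type*} [CommRing R] [IsDomain R]

theorem totalDegree_pow_of_isDomain (p : MvPolynomial σ R) (m : ℕ) :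
    (p ^ m).totalDegree = m * p.totalDegree := by
  rcases eq_or_ne p 0 with rfl | hp
  · rcases m with _ | m <;> simp
  induction m with
  | zero => simp
  | succ m ih =>
    rw [pow_succ, totalDegree_mul_of_isDomain (pow_ne_zero m hp) hp, ih]
    ring

theorem totalDegree_C_mul_of_ne_zero {a : R} (ha : a ≠ 0) (p : MvPolynomial σ R) :
    (C a * p).totalDegree = p.totalDegree := by
  rcases eq_or_ne p 0 with rfl | hp
  · simp
  rw [totalDegree_mul_of_isDomain (C_ne_zero.mpr ha) hp, totalDegree_C, zero_add]

theorem totalDegree_sum_Iic_C_mul {ι : Type*} [LinearOrder ι] [LocallyFiniteOrderBot ι]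
    {a : ι → R} {p : ι → MvPolynomial σ R} {k : ι} (ha : a k ≠ 0)
    (hp : ∀ j < k, (p j).totalDegree < (p k).totalDegree) :
    (∑ j ∈ Finset.Iic k, C (a j) * p j).totalDegree = (p k).totalDegree := by
  classical
  rw [← Finset.Iio_insert, Finset.sum_insert Finset.notMem_Iio_self]
  rcases Nat.eq_zero_or_pos (p k).totalDegree with hk | hk
  · have hzero : ∑ j ∈ Finset.Iio k, C (a j) * p j = 0 :=
      Finset.sum_eq_zero fun j hj => absurd (hp j (Finset.mem_Iio.mp hj)) (by omega)
    rw [hzero, add_zero, totalDegree_C_mul_of_ne_zero ha]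
  have hrest : (∑ j ∈ Finset.Iio k, C (a j) * p j).totalDegree < (p k).totalDegree := by
    refine (totalDegree_finsetSum _ _).trans_lt ((Finset.sup_lt_iff hk).mpr fun j hj => ?_)
    calc (C (a j) * p j).totalDegree ≤ (C (a j)).totalDegree + (p j).totalDegree :=
          totalDegree_mul _ _
      _ < (p k).totalDegree := by
          rw [totalDegree_C, zero_add]; exact hp j (Finset.mem_Iio.mp hj)
  rw [totalDegree_add_eq_left_of_totalDegree_lt (by rwa [totalDegree_C_mul_of_ne_zero ha]),
    totalDegree_C_mul_of_ne_zero ha]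

theorem totalDegree_X_sub_of_one_lt {q : MvPolynomial σ R} (s : σ) (hq : 1 < q.totalDegree) :
    (X s - q).totalDegree = q.totalDegree := by
  rw [sub_eq_add_neg, totalDegree_add_eq_right_of_totalDegree_lt, totalDegree_neg]
  rwa [totalDegree_neg, totalDegree_X]

end MvPolynomial

section TriangularInverse

variable {R : Type*} [CommRing R] {n : ℕ} (d : ℕ) (A : Matrix (Fin n) (Fin n) R)

noncomputable def powerLinear : Fin n → MvPolynomial (Fin n) R :=
  fun i => X i + (∑ j, C (A i j) * X j) ^ d

noncomputable def triangularInverse : Fin n → MvPolynomial (Fin n) R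
  | i => X i - (∑ j ∈ (Finset.Iio i).attach, C (A i j) * triangularInverse j) ^ d
termination_by i => (i : ℕ)
decreasing_by exact Fin.lt_def.mp (Finset.mem_Iio.mp j.2)

theorem triangularInverse_apply (i : Fin n) :
    triangularInverse d A i =
      X i - (∑ j ∈ Finset.Iio i, C (A i j) * triangularInverse d A j) ^ d := by
  rw [triangularInverse,
    Finset.sum_attach (Finset.Iio i) fun j => C (A i j) * triangularInverse d A j]

theorem triangularInverse_of_val_eq_zero (hd : d ≠ 0) {i : Fin n} (hi : (i : ℕ) = 0) :
    triangularInverse d A i = X i := by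
  have hIio : Finset.Iio i = ∅ := Finset.eq_empty_of_forall_notMem fun j hj => by
    rw [Finset.mem_Iio, Fin.lt_def] at hj; omega
  rw [triangularInverse_apply, hIio, Finset.sum_empty, zero_pow hd, sub_zero]

variable {A}

theorem sum_C_mul_eq_sum_Iio (hlow : ∀ i j : Fin n, i ≤ j → A i j = 0) (i : Fin n)
    (p : Fin n → MvPolynomial (Fin n) R) :
    ∑ j, C (A i j) * p j = ∑ j ∈ Finset.Iio i, C (A i j) * p j := by
  refine (Finset.sum_subset (Finset.subset_univ _) fun j _ hj => ?_).symm
  rw [hlow i j (not_lt.mp (Finset.mem_Iio.not.mp hj)), map_zero, zero_mul]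

theorem bind₁_powerLinear_triangularInverse (hlow : ∀ i j : Fin n, i ≤ j → A i j = 0)
    (i : Fin n) : bind₁ (powerLinear d A) (triangularInverse d A i) = X i := by
  induction i using WellFoundedLT.induction with
  | ind i ih =>
    have hlin : bind₁ (powerLinear d A)
        (∑ j ∈ Finset.Iio i, C (A i j) * triangularInverse d A j) = ∑ j, C (A i j) * X j := by
      rw [sum_C_mul_eq_sum_Iio hlow, map_sum]
      refine Finset.sum_congr rfl fun j hj => ?_
      rw [map_mul, bind₁_C_right, ih j (Finset.mem_Iio.mp hj)]
    rw [triangularInverse_apply, map_sub, map_pow, hlin, bind₁_X_right, powerLinear,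
      add_sub_cancel_right]

theorem bind₁_triangularInverse_powerLinear (hlow : ∀ i j : Fin n, i ≤ j → A i j = 0)
    (i : Fin n) : bind₁ (triangularInverse d A) (powerLinear d A i) = X i := by
  simp only [powerLinear, map_add, map_pow, map_sum, map_mul, bind₁_X_right, bind₁_C_right]
  rw [sum_C_mul_eq_sum_Iio hlow, triangularInverse_apply, sub_add_cancel]

theorem isPolyInverse_triangularInverse (hlow : ∀ i j : Fin n, i ≤ j → A i j = 0) :
    IsPolyInverse (triangularInverse d A) (powerLinear d A) :=
  ⟨bind₁_powerLinear_triangularInverse d hlow, bind₁_triangularInverse_powerLinear d hlow⟩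

end TriangularInverse

section Degree

variable {R : Type*} [CommRing R] [IsDomain R] {n d : ℕ} {A : Matrix (Fin n) (Fin n) R}

theorem totalDegree_triangularInverse (hd : 2 ≤ d)
    (hsub : ∀ i j : Fin n, (j : ℕ) + 1 = (i : ℕ) → A i j ≠ 0) (i : Fin n) :
    (triangularInverse d A i).totalDegree = d ^ (i : ℕ) := by
  induction i using WellFoundedLT.induction with
  | ind i ih =>
    cases hk : (i : ℕ) with
    | zero => rw [triangularInverse_of_val_eq_zero d A (by omega) hk, totalDegree_X, pow_zero]
    | succ k =>
      set i' : Fin n := ⟨k, by omega⟩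
      have hi' : i' < i := Fin.lt_def.mpr (by simp [i', hk])
      have hIio : Finset.Iio i = Finset.Iic i' := by
        ext j; simp only [Finset.mem_Iio, Finset.mem_Iic, Fin.lt_def, Fin.le_def, i']; omega
      have hlin :
          (∑ j ∈ Finset.Iio i, C (A i j) * triangularInverse d A j).totalDegree = d ^ k := by
        rw [hIio, totalDegree_sum_Iic_C_mul (hsub i i' hk.symm), ih i' hi']
        intro j hj
        rw [ih j (hj.trans hi'), ih i' hi']
        exact Nat.pow_lt_pow_right (by omega) hj
      have hpow : ((∑ j ∈ Finset.Iio i, C (A i j) * triangularInverse d A j) ^ d).totalDegree =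
          d ^ (k + 1) := by
        rw [totalDegree_pow_of_isDomain, hlin, pow_succ']
      rw [triangularInverse_apply,
        totalDegree_X_sub_of_one_lt _ (hpow ▸ Nat.one_lt_pow (by omega) (by omega)), hpow]

end Degree

/-- Let `A` be strictly lower triangular with nonzero entries on the
subdiagonal. Then `F = x + (Ax)^{*d}` (with `d ≥ 2`) is invertible, its inverse `G`
satisfies `G₁ = x₁`, `Gᵢ = xᵢ - (A_{i1}G₁ + ⋯ + A_{i,i-1}G_{i-1})^d`, and
`deg Gᵢ = d^{i-1}` for all `i`; in particular the inverse has degree `d^{n-1}`. -/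
theorem inverse_of_triangular_powerLinear
    {K : Type*} [Field K] {n : ℕ} (hn : 0 < n) (d : ℕ) (hd : 2 ≤ d)
    (A : Matrix (Fin n) (Fin n) K)
    (hlow : ∀ i j : Fin n, i ≤ j → A i j = 0)
    (hsub : ∀ i j : Fin n, (j : ℕ) + 1 = (i : ℕ) → A i j ≠ 0)
    (F : Fin n → MvPolynomial (Fin n) K)
    (hF : F = fun i => X i + (∑ j, C (A i j) * X j) ^ d) :
    ∃ G : Fin n → MvPolynomial (Fin n) K, IsPolyInverse G F ∧
      (∀ i : Fin n, (i : ℕ) = 0 → G i = X i) ∧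
      (∀ i : Fin n, 0 < (i : ℕ) →
        G i = X i - (∑ j ∈ Finset.univ.filter fun j => j < i, C (A i j) * G j) ^ d) ∧
      (∀ i : Fin n, (G i).totalDegree = d ^ (i : ℕ)) ∧
      (Finset.univ.sup fun i => (G i).totalDegree) = d ^ (n - 1) := by
  have hdeg := totalDegree_triangularInverse hd hsub
  refine ⟨triangularInverse d A, hF ▸ isPolyInverse_triangularInverse d hlow,
    fun i hi => triangularInverse_of_val_eq_zero d A (by omega) hi,
    fun i _ => by rw [Finset.filter_gt_eq_Iio, triangularInverse_apply], hdeg, ?_⟩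
  refine le_antisymm (Finset.sup_le fun i _ => ?_) ?_
  · rw [hdeg]
    exact Nat.pow_le_pow_right (by omega) (by omega)
  · simpa [hdeg] using Finset.le_sup (f := fun i => (triangularInverse d A i).totalDegree)
      (Finset.mem_univ (⟨n - 1, by omega⟩ : Fin n))
end

section
/- The quadratic polynomial map F = (x_1 + x_2 x_3, x_2 − x_1 x_3, x_3): ℝ^3 → ℝ^3 has Jacobian determinant 1 + x_3^2, which vanishes nowhere on ℝ^3, and F is injective on ℝ^3; however, F is not invertible as a polynomial map, i.e. there is no polynomial map G: ℝ^3 → ℝ^3 with G∘F equal to the identity. -/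
open MvPolynomial

/-- The quadratic map `F = (x₁ + x₂x₃, x₂ - x₁x₃, x₃) : ℝ³ → ℝ³` has
Jacobian determinant `1 + x₃²`, which vanishes nowhere, and `F` is injective; yet `F`
is not invertible as a polynomial map. -/
theorem injective_noninvertible_quadratic_example :
    ∀ F : Fin 3 → MvPolynomial (Fin 3) ℝ,
      F = ![X 0 + X 1 * X 2, X 1 - X 0 * X 2, X 2] →
      (Matrix.of fun i j => pderiv j (F i)).det = 1 + X 2 ^ 2 ∧
      (∀ v : Fin 3 → ℝ,
        eval v ((Matrix.of fun i j => pderiv j (F i)).det) ≠ 0) ∧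
      Function.Injective (fun v : Fin 3 → ℝ => fun i => eval v (F i)) ∧
      ¬ ∃ G : Fin 3 → MvPolynomial (Fin 3) ℝ, ∀ i, bind₁ F (G i) = X i := by
  intro F hF
  subst hF
  have hdet : (Matrix.of fun i j =>
      pderiv j ((![X 0 + X 1 * X 2, X 1 - X 0 * X 2, X 2] : Fin 3 → MvPolynomial (Fin 3) ℝ) i)).det
      = 1 + X 2 ^ 2 := by
    simp [Matrix.det_fin_three, Matrix.of_apply, pderiv_X, Pi.single_apply]
    ring
  refine ⟨hdet, ?_, ?_, ?_⟩
  · intro v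
    rw [hdet]
    simp only [map_add, map_one, map_pow, eval_X]
    positivity
  · intro v w h
    have h0 := congrFun h 0
    have h1 := congrFun h 1
    have h2 := congrFun h 2
    simp only [Matrix.cons_val_zero, Matrix.cons_val_one, Matrix.head_cons,
      Matrix.cons_val_two, Matrix.tail_cons, map_add, map_sub, map_mul, eval_X] at h0 h1 h2
    have ha : (v 0 - w 0) * (1 + w 2 ^ 2) = 0 := by
      linear_combination h0 - w 2 * h1 - (v 1 + w 2 * v 0) * h2
    have hb : (v 1 - w 1) * (1 + w 2 ^ 2) = 0 := by
      linear_combination h1 + w 2 * h0 + (v 0 - w 2 * v 1) * h2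
    have hpos : (0:ℝ) < 1 + w 2 ^ 2 := by positivity
    have ea : v 0 = w 0 := by
      rcases mul_eq_zero.mp ha with h | h
      · linarith
      · linarith
    have eb : v 1 = w 1 := by
      rcases mul_eq_zero.mp hb with h | h
      · linarith
      · linarith
    funext i
    fin_cases i
    · exact ea
    · exact eb
    · exact h2
  · rintro ⟨G, hG⟩
    have key : ∀ v : Fin 3 → ℂ, ∀ p : MvPolynomial (Fin 3) ℝ,
        aeval v (bind₁ (![X 0 + X 1 * X 2, X 1 - X 0 * X 2, X 2] : Fin 3 → MvPolynomial (Fin 3) ℝ) p)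
        = aeval (fun i => aeval v ((![X 0 + X 1 * X 2, X 1 - X 0 * X 2, X 2] : Fin 3 → MvPolynomial (Fin 3) ℝ) i)) p := by
      intro v p; exact aeval_bind₁ v _ p
    set v1 : Fin 3 → ℂ := ![1, Complex.I, Complex.I] with hv1
    set v2 : Fin 3 → ℂ := ![0, 0, Complex.I] with hv2
    have hfe : (fun i => aeval v1 ((![X 0 + X 1 * X 2, X 1 - X 0 * X 2, X 2] : Fin 3 → MvPolynomial (Fin 3) ℝ) i))
        = fun i => aeval v2 ((![X 0 + X 1 * X 2, X 1 - X 0 * X 2, X 2] : Fin 3 → MvPolynomial (Fin 3) ℝ) i) := by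
      funext i
      fin_cases i <;>
        simp [hv1, hv2, Complex.I_mul_I]
    have e1 := key v1 (G 0)
    have e2 := key v2 (G 0)
    rw [hG 0, aeval_X] at e1 e2
    rw [hfe, ← e2] at e1
    simp [hv1, hv2] at e1
end
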